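/- arXiv:math/0504357 — 3 statements merged into one kernel-verified Lean document; each statement's English description precedes it below -/
import Mathlib

section
/- Let X be a metric space and for every n ∈ ℕ let γₙ : [0,1] → X, such that the family {γₙ : n ∈ ℕ} is equicontinuous, the set {γₙ(0) : n ∈ ℕ} is spaced (pairwise distances exceed some fixed r > 0, and the points γₙ(0) are pairwise distinct), and the sequence (γₙ(1))ₙ is Cauchy. Then there are s ∈ (0,1] and an infinite set σ ⊆ ℕ such that the sequence (γₙ(s))_{n∈σ} is Cauchy, and for every t ∈ [0,s) the family of sets {γₙ([0,t]) : n ∈ σ} is almost spaced. -/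
open Metric Set


/-- Generic recursive chain construction of nested infinite subsets of `ℕ`. -/
lemma chain_construction (base : Set ℕ) (hbase : base.Infinite)
    (Q : ℕ → Set ℕ → Set ℕ → Prop)
    (step : ∀ k (E : Set ℕ), E.Infinite → E ⊆ base →
      ∃ E', E' ⊆ E ∧ E'.Infinite ∧ Q k E E') :
    ∃ S : ℕ → Set ℕ, S 0 = base ∧ (∀ k, (S k).Infinite) ∧
      (∀ k, S (k+1) ⊆ S k) ∧ (∀ k, S k ⊆ base) ∧ ∀ k, Q k (S k) (S (k+1)) := by
  have step' : ∀ k (E : Set ℕ), ∃ E',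
      (E.Infinite → E ⊆ base → (E' ⊆ E ∧ E'.Infinite ∧ Q k E E')) := by
    intro k E
    by_cases h : E.Infinite ∧ E ⊆ base
    · obtain ⟨E', h1, h2, h3⟩ := step k E h.1 h.2
      exact ⟨E', fun _ _ => ⟨h1, h2, h3⟩⟩
    · exact ⟨∅, fun h1 h2 => absurd ⟨h1, h2⟩ h⟩
  choose F hF using step'
  refine ⟨fun k => Nat.rec base (fun k ih => F k ih) k, rfl, ?_⟩
  set S : ℕ → Set ℕ := fun k => Nat.rec base (fun k ih => F k ih) k with hS
  have key : ∀ k, (S k).Infinite ∧ S k ⊆ base := by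
    intro k
    induction k with
    | zero => exact ⟨hbase, le_refl _⟩
    | succ k ih =>
      obtain ⟨h1, h2, _⟩ := hF k (S k) ih.1 ih.2
      exact ⟨h2, h1.trans ih.2⟩
  have sub : ∀ k, S (k+1) ⊆ S k := fun k => (hF k (S k) (key k).1 (key k).2).1
  exact ⟨fun k => (key k).1, sub, fun k => (key k).2,
    fun k => (hF k (S k) (key k).1 (key k).2).2.2⟩

lemma nested_subset (S : ℕ → Set ℕ) (hnest : ∀ k, S (k+1) ⊆ S k) :
    ∀ k l, k ≤ l → S l ⊆ S k := by
  intro k l h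
  induction h with
  | refl => exact le_refl _
  | step h ih => exact (hnest _).trans ih

/-- Diagonal through a family of infinite sets. -/
lemma diagonal_construction (S : ℕ → Set ℕ) (hinf : ∀ k, (S k).Infinite) :
    ∃ a : ℕ → ℕ, StrictMono a ∧ ∀ k, a k ∈ S k := by
  have hg : ∀ k (n : ℕ), ∃ m, m ∈ S k ∧ n < m := by
    intro k n
    obtain ⟨m, hm, hlt⟩ := (hinf k).exists_gt n
    exact ⟨m, hm, hlt⟩
  choose G hG1 hG2 using hg
  refine ⟨fun k => Nat.rec (G 0 0) (fun k ih => G (k+1) ih) k, ?_, ?_⟩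
  · apply strictMono_nat_of_lt_succ
    intro n
    exact hG2 _ _
  · intro k
    induction k with
    | zero => exact hG1 0 0
    | succ k _ => exact hG1 _ _

/-- Infinite pigeonhole: an infinite set mapped into a finite set has an infinite fiber. -/
lemma infinite_pigeonhole {β : Type*} (E : Set ℕ) (hE : E.Infinite)
    (Z : Set β) (hZ : Z.Finite) (f : ℕ → β) (hf : ∀ l ∈ E, f l ∈ Z) :
    ∃ z ∈ Z, {l | l ∈ E ∧ f l = z}.Infinite := by
  by_contra h
  push_neg at h
  have hsub : E ⊆ ⋃ z ∈ Z, {l | l ∈ E ∧ f l = z} := by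
    intro l hl
    exact mem_biUnion (hf l hl) ⟨hl, rfl⟩
  have : (⋃ z ∈ Z, {l | l ∈ E ∧ f l = z}).Finite :=
    hZ.biUnion (fun z hz => h z hz)
  exact hE (this.subset hsub)

/-- Infinite Ramsey theorem for pairs, two colours, for a symmetric relation. -/
lemma ramsey_pairs (A : Set ℕ) (hA : A.Infinite) (P : ℕ → ℕ → Prop)
    (hsymm : ∀ m n, P m n → P n m) :
    (∃ B, B ⊆ A ∧ B.Infinite ∧ ∀ m ∈ B, ∀ n ∈ B, m ≠ n → P m n) ∨
    (∃ B, B ⊆ A ∧ B.Infinite ∧ ∀ m ∈ B, ∀ n ∈ B, m ≠ n → ¬ P m n) := by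
  classical
  obtain ⟨S, hS0, hSinf, hSnest, hSbase, hQ⟩ := chain_construction A hA
    (fun _ E E' => ∃ a ∈ E, (∀ b ∈ E', a < b) ∧
      ((∀ b ∈ E', P a b) ∨ (∀ b ∈ E', ¬ P a b)))
    (by
      intro k E hEinf _
      obtain ⟨a, ha⟩ := hEinf.nonempty
      set E1 := {b | b ∈ E ∧ a < b ∧ P a b} with hE1
      set E2 := {b | b ∈ E ∧ a < b ∧ ¬ P a b} with hE2
      have hcover : {b | b ∈ E ∧ a < b} ⊆ E1 ∪ E2 := by
        intro b hb
        by_cases h : P a b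
        · exact Or.inl ⟨hb.1, hb.2, h⟩
        · exact Or.inr ⟨hb.1, hb.2, h⟩
      have hbig : {b | b ∈ E ∧ a < b}.Infinite := by
        have heq : {b | b ∈ E ∧ a < b} = E \ {b | b ≤ a} := by
          ext b
          simp only [mem_setOf_eq, mem_diff, not_le]
        rw [heq]
        exact hEinf.diff (Set.finite_Iic a)
      have hor : E1.Infinite ∨ E2.Infinite := by
        by_contra h
        push_neg at h
        exact hbig ((h.1.union h.2).subset hcover)
      rcases hor with h | h
      · exact ⟨E1, fun b hb => hb.1, h, a, ha, fun b hb => hb.2.1,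
          Or.inl (fun b hb => hb.2.2)⟩
      · exact ⟨E2, fun b hb => hb.1, h, a, ha, fun b hb => hb.2.1,
          Or.inr (fun b hb => hb.2.2)⟩)
  choose a haE hlt hcol using hQ
  have haS : ∀ k, a k ∈ S k := haE
  have hmem : ∀ k l, k < l → a l ∈ S (k+1) :=
    fun k l hkl => nested_subset S hSnest (k+1) l hkl (haS l)
  have hamono : StrictMono a := by
    have : ∀ k l, k < l → a k < a l := fun k l hkl => hlt k (a l) (hmem k l hkl)
    intro k l hkl
    exact this k l hkl
  set I1 := {k | ∀ b ∈ S (k+1), P (a k) b} with hI1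
  have hsplit : I1.Infinite ∨ {k | k ∉ I1}.Infinite := by
    by_contra h
    push_neg at h
    exact (Set.infinite_univ (α := ℕ))
      ((h.1.union h.2).subset (fun k _ => by by_cases hk : k ∈ I1
                                             · exact Or.inl hk
                                             · exact Or.inr hk))
  have haA : ∀ k, a k ∈ A := fun k => hSbase k (haS k)
  rcases hsplit with h | h
  · left
    refine ⟨a '' I1, ?_, h.image (hamono.injective.injOn), ?_⟩
    · rintro m ⟨k, _, rfl⟩; exact haA k
    · rintro m ⟨k, hk, rfl⟩ n ⟨l, hl, rfl⟩ hne
      rcases lt_trichotomy k l with hkl | hkl | hkl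
      · exact hk _ (hmem k l hkl)
      · exact absurd (congrArg a hkl) hne
      · exact hsymm _ _ (hl _ (hmem l k hkl))
  · right
    refine ⟨a '' {k | k ∉ I1}, ?_, h.image (hamono.injective.injOn), ?_⟩
    · rintro m ⟨k, _, rfl⟩; exact haA k
    · rintro m ⟨k, hk, rfl⟩ n ⟨l, hl, rfl⟩ hne
      have hcol' : ∀ j, j ∉ I1 → ∀ b ∈ S (j+1), ¬ P (a j) b := by
        intro j hj
        rcases hcol j with hc | hc
        · exact absurd hc hj
        · exact hc
      rcases lt_trichotomy k l with hkl | hkl | hkl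
      · exact hcol' k hk _ (hmem k l hkl)
      · exact absurd (congrArg a hkl) hne
      · exact fun hp => hcol' l hl _ (hmem l k hkl) (hsymm _ _ hp)


section CAS
variable {X : Type} [MetricSpace X] (γ : ℕ → ℝ → X)

/-- The family `{γ n ([0,t]) : n ∈ B}` is `r`-spaced. -/
def CASSpaced (B : Set ℕ) (t r : ℝ) : Prop :=
  ∀ m ∈ B, ∀ n ∈ B, m ≠ n → ∀ u ∈ Icc (0:ℝ) t, ∀ v ∈ Icc (0:ℝ) t,
    r < dist (γ m u) (γ n v)

/-- Times `t ∈ [0,1]` at which some infinite subfamily of `A` is spaced. -/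
def CASTT (A : Set ℕ) : Set ℝ :=
  {t | t ∈ Icc (0:ℝ) 1 ∧ ∃ B, B ⊆ A ∧ B.Infinite ∧ ∃ r > 0, CASSpaced γ B t r}

noncomputable def CASsA (A : Set ℕ) : ℝ := sSup (CASTT γ A)

lemma CASSpaced_mono {B' B : Set ℕ} {t r : ℝ} (h : B' ⊆ B)
    (hs : CASSpaced γ B t r) : CASSpaced γ B' t r :=
  fun m hm n hn => hs m (h hm) n (h hn)

lemma CASSpaced_mono_t {B : Set ℕ} {t' t r : ℝ} (h : t' ≤ t)
    (hs : CASSpaced γ B t r) : CASSpaced γ B t' r :=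
  fun m hm n hn hmn u hu v hv =>
    hs m hm n hn hmn u (Icc_subset_Icc_right h hu) v (Icc_subset_Icc_right h hv)

lemma CASTT_bdd (A : Set ℕ) : BddAbove (CASTT γ A) :=
  ⟨1, fun t ht => ht.1.2⟩

variable (hequi : ∀ ε : ℝ, 0 < ε → ∃ δ : ℝ, 0 < δ ∧
      ∀ n : ℕ, ∀ s ∈ Set.Icc (0:ℝ) 1, ∀ t ∈ Set.Icc (0:ℝ) 1,
        |s - t| < δ → dist (γ n s) (γ n t) < ε)
    (hspaced : ∃ r : ℝ, 0 < r ∧ ∀ m n : ℕ, m ≠ n → r < dist (γ m 0) (γ n 0))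

include hequi hspaced in
/-- There is a uniform positive time below which every family is spaced. -/
lemma CAS_exists_c : ∃ c, 0 < c ∧ c ≤ 1 ∧
    ∀ A : Set ℕ, A.Infinite → c ∈ CASTT γ A := by
  obtain ⟨r, hr, hsp⟩ := hspaced
  obtain ⟨δ, hδ, hδ2⟩ := hequi (r/4) (by linarith)
  refine ⟨min (δ/2) 1, by positivity, min_le_right _ _, ?_⟩
  intro A hA
  refine ⟨⟨by positivity, min_le_right _ _⟩, A, le_refl _, hA, r/2, by linarith, ?_⟩
  intro m _ n _ hmn u hu v hv
  have hu1 : u ∈ Icc (0:ℝ) 1 := ⟨hu.1, hu.2.trans (min_le_right _ _)⟩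
  have hv1 : v ∈ Icc (0:ℝ) 1 := ⟨hv.1, hv.2.trans (min_le_right _ _)⟩
  have h01 : (0:ℝ) ∈ Icc (0:ℝ) 1 := ⟨le_refl _, zero_le_one⟩
  have hm0 : dist (γ m u) (γ m 0) < r/4 := by
    apply hδ2 m u hu1 0 h01
    rw [sub_zero, abs_of_nonneg hu.1]
    exact lt_of_le_of_lt (hu.2.trans (min_le_left _ _)) (by linarith)
  have hn0 : dist (γ n v) (γ n 0) < r/4 := by
    apply hδ2 n v hv1 0 h01
    rw [sub_zero, abs_of_nonneg hv.1]
    exact lt_of_le_of_lt (hv.2.trans (min_le_left _ _)) (by linarith)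
  have h0 : r < dist (γ m 0) (γ n 0) := hsp m n hmn
  have htri : dist (γ m 0) (γ n 0) ≤ dist (γ m u) (γ m 0) + dist (γ m u) (γ n v)
      + dist (γ n v) (γ n 0) := by
    rw [dist_comm (γ m u) (γ m 0)]
    exact dist_triangle4 _ _ _ _
  linarith

include hequi hspaced in
lemma CASTT_nonempty {A : Set ℕ} (hA : A.Infinite) : (CASTT γ A).Nonempty := by
  obtain ⟨c, _, _, h⟩ := CAS_exists_c γ hequi hspaced
  exact ⟨c, h A hA⟩

include hequi hspaced in
lemma CASsA_pos {A : Set ℕ} (hA : A.Infinite) :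
    ∃ c, 0 < c ∧ c ≤ CASsA γ A := by
  obtain ⟨c, hc, _, h⟩ := CAS_exists_c γ hequi hspaced
  exact ⟨c, hc, le_csSup (CASTT_bdd γ A) (h A hA)⟩

lemma CASsA_le_one (A : Set ℕ) (hne : (CASTT γ A).Nonempty) : CASsA γ A ≤ 1 :=
  csSup_le hne (fun t ht => ht.1.2)

include hequi hspaced in
lemma CASsA_mono {B A : Set ℕ} (hBA : B ⊆ A) (hB : B.Infinite) :
    CASsA γ B ≤ CASsA γ A := by
  apply csSup_le_csSup (CASTT_bdd γ A) (CASTT_nonempty γ hequi hspaced hB)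
  rintro t ⟨ht1, W, hWB, hWinf, hr⟩
  exact ⟨ht1, W, hWB.trans hBA, hWinf, hr⟩

/-- Removing finitely many indices can only increase the family of good times. -/
lemma CASTT_cofinite {B' B : Set ℕ} (hsub : B' ⊆ B) (hfin : (B \ B').Finite) :
    CASTT γ B ⊆ CASTT γ B' := by
  rintro t ⟨ht1, W, hWB, hWinf, r, hr, hsp⟩
  refine ⟨ht1, W ∩ B', ?_, ?_, r, hr, CASSpaced_mono γ (inter_subset_left) hsp⟩
  · exact inter_subset_right
  · apply Set.Infinite.mono ?_ (hWinf.diff hfin)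
    intro w hw
    exact ⟨hw.1, by_contra fun h => hw.2 ⟨hWB hw.1, h⟩⟩

include hequi hspaced in
lemma CASsA_cofinite {B' B : Set ℕ} (hsub : B' ⊆ B) (hfin : (B \ B').Finite)
    (hB : B.Infinite) : CASsA γ B' = CASsA γ B := by
  have hB' : B'.Infinite := by
    have := hB.diff hfin
    apply this.mono
    intro x hx
    rcases hx with ⟨h1, h2⟩
    by_contra h
    exact h2 ⟨h1, h⟩
  refine le_antisymm (CASsA_mono γ hequi hspaced hsub hB') ?_
  exact csSup_le_csSup ⟨1, fun t ht => ht.1.2⟩ (CASTT_nonempty γ hequi hspaced hB)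
    (CASTT_cofinite γ hsub hfin)

include hequi hspaced in
lemma CAS_mem_TT_of_lt {A : Set ℕ} (hA : A.Infinite) {t : ℝ} (ht0 : 0 ≤ t)
    (ht : t < CASsA γ A) : t ∈ CASTT γ A := by
  obtain ⟨t', ht', htt'⟩ := exists_lt_of_lt_csSup (CASTT_nonempty γ hequi hspaced hA) ht
  obtain ⟨ht'1, W, hW, hWinf, r, hr, hsp⟩ := ht'
  exact ⟨⟨ht0, htt'.le.trans ht'1.2⟩, W, hW, hWinf, r, hr,
    CASSpaced_mono_t γ htt'.le hsp⟩

include hequi in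
lemma CAS_continuousOn (n : ℕ) : ContinuousOn (γ n) (Icc (0:ℝ) 1) := by
  intro x hx
  rw [Metric.continuousWithinAt_iff]
  intro ε hε
  obtain ⟨δ, hδ, h⟩ := hequi ε hε
  refine ⟨δ, hδ, fun y hy hxy => ?_⟩
  apply h n y hy x hx
  rwa [← Real.dist_eq]

include hequi in
lemma CAS_net (n : ℕ) {t : ℝ} (ht : t ≤ 1) {ρ : ℝ} (hρ : 0 < ρ) :
    ∃ Z : Set X, Z.Finite ∧ γ n '' Icc (0:ℝ) t ⊆ ⋃ z ∈ Z, ball z ρ := by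
  have hK : IsCompact (γ n '' Icc (0:ℝ) t) := by
    rcases le_or_gt 0 t with h0 | h0
    · exact (isCompact_Icc).image_of_continuousOn
        ((CAS_continuousOn γ hequi n).mono (Icc_subset_Icc_right ht))
    · rw [Icc_eq_empty (by linarith), image_empty]
      exact isCompact_empty
  exact totallyBounded_iff.mp hK.totallyBounded ρ hρ

end CAS


section CAS3
variable {X : Type} [MetricSpace X] (γ : ℕ → ℝ → X)
variable (hequi : ∀ ε : ℝ, 0 < ε → ∃ δ : ℝ, 0 < δ ∧
      ∀ n : ℕ, ∀ s ∈ Set.Icc (0:ℝ) 1, ∀ t ∈ Set.Icc (0:ℝ) 1,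
        |s - t| < δ → dist (γ n s) (γ n t) < ε)
    (hspaced : ∃ r : ℝ, 0 < r ∧ ∀ m n : ℕ, m ≠ n → r < dist (γ m 0) (γ n 0))

include hequi hspaced in
/-- A "stable" infinite set: all its infinite subsets have the same `CASsA` value. -/
lemma CAS_exists_sigma1 : ∃ σ₁ : Set ℕ, σ₁.Infinite ∧
    ∀ B, B ⊆ σ₁ → B.Infinite → CASsA γ B = CASsA γ σ₁ := by
  classical
  set V : Set ℕ → Set ℝ := fun E => (fun B => CASsA γ B) '' {B | B ⊆ E ∧ B.Infinite}
    with hV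
  have hVne : ∀ E : Set ℕ, E.Infinite → (V E).Nonempty :=
    fun E hE => ⟨CASsA γ E, E, ⟨le_refl _, hE⟩, rfl⟩
  have hVbdd : ∀ E : Set ℕ, BddBelow (V E) := by
    intro E
    refine ⟨0, ?_⟩
    rintro x ⟨B, ⟨_, hBinf⟩, rfl⟩
    obtain ⟨c, hc, hc2⟩ := CASsA_pos γ hequi hspaced hBinf
    linarith
  obtain ⟨S, hS0, hSinf, hSnest, hSbase, hQ⟩ := chain_construction Set.univ
    Set.infinite_univ
    (fun k E E' => CASsA γ E' < sInf (V E) + (1/2)^k)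
    (by
      intro k E hEinf _
      have hlt : sInf (V E) < sInf (V E) + (1/2)^k := by
        have : (0:ℝ) < (1/2)^k := by positivity
        linarith
      obtain ⟨x, hx, hxlt⟩ := (csInf_lt_iff (hVbdd E) (hVne E hEinf)).mp hlt
      obtain ⟨B, ⟨hBE, hBinf⟩, rfl⟩ := hx
      exact ⟨B, hBE, hBinf, hxlt⟩)
  obtain ⟨a, hamono, haS⟩ := diagonal_construction S hSinf
  set σ₁ : Set ℕ := Set.range a with hσ₁
  have hσinf : σ₁.Infinite := Set.infinite_range_of_injective hamono.injective
  -- any infinite B ⊆ σ₁ is cofinitely inside each S k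
  have hcof : ∀ B, B ⊆ σ₁ → ∀ k, (B \ S k).Finite := by
    intro B hB k
    apply Set.Finite.subset ((Set.finite_Iio k).image a)
    intro b ⟨hb, hbk⟩
    obtain ⟨j, rfl⟩ := hB hb
    refine ⟨j, ?_, rfl⟩
    by_contra hj
    exact hbk (nested_subset S hSnest k j (by simpa using hj) (haS j))
  have hBk : ∀ B, B ⊆ σ₁ → B.Infinite → ∀ k,
      sInf (V (S k)) ≤ CASsA γ B ∧ CASsA γ B < sInf (V (S k)) + (1/2)^k := by
    intro B hB hBinf k
    have hBSk : (B ∩ S k).Infinite := by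
      apply Set.Infinite.mono ?_ (hBinf.diff (hcof B hB k))
      intro x hx
      exact ⟨hx.1, by_contra fun h => hx.2 ⟨hx.1, h⟩⟩
    have heq : ∀ j, CASsA γ (B ∩ S j) = CASsA γ B := by
      intro j
      apply CASsA_cofinite γ hequi hspaced inter_subset_left ?_ hBinf
      apply Set.Finite.subset (hcof B hB j)
      intro x hx
      exact ⟨hx.1, fun h => hx.2 ⟨hx.1, h⟩⟩
    constructor
    · rw [← heq k]
      exact csInf_le (hVbdd (S k)) ⟨B ∩ S k, ⟨inter_subset_right, hBSk⟩, rfl⟩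
    · have h1 : CASsA γ B = CASsA γ (B ∩ S (k+1)) := (heq (k+1)).symm
      have h2 : CASsA γ (B ∩ S (k+1)) ≤ CASsA γ (S (k+1)) := by
        apply CASsA_mono γ hequi hspaced inter_subset_right
        apply Set.Infinite.mono ?_ (hBinf.diff (hcof B hB (k+1)))
        intro x hx
        exact ⟨hx.1, by_contra fun h => hx.2 ⟨hx.1, h⟩⟩
      have h3 := hQ k
      linarith
  refine ⟨σ₁, hσinf, ?_⟩
  intro B hB hBinf
  have hBs := hBk B hB hBinf
  have hσs := hBk σ₁ (le_refl _) hσinf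
  by_contra hne
  rcases lt_or_gt_of_ne hne with h | h
  · obtain ⟨k, hk⟩ := exists_pow_lt_of_lt_one (show (0:ℝ) < CASsA γ σ₁ - CASsA γ B
      by linarith) (by norm_num : (1:ℝ)/2 < 1)
    have h1 := (hBs k).1
    have h2 := (hσs k).2
    linarith
  · obtain ⟨k, hk⟩ := exists_pow_lt_of_lt_one (show (0:ℝ) < CASsA γ B - CASsA γ σ₁
      by linarith) (by norm_num : (1:ℝ)/2 < 1)
    have h1 := (hσs k).1
    have h2 := (hBs k).2
    linarith

end CAS3


section CAS4
variable {X : Type} [MetricSpace X] (γ : ℕ → ℝ → X)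
variable (hequi : ∀ ε : ℝ, 0 < ε → ∃ δ : ℝ, 0 < δ ∧
      ∀ n : ℕ, ∀ s ∈ Set.Icc (0:ℝ) 1, ∀ t ∈ Set.Icc (0:ℝ) 1,
        |s - t| < δ → dist (γ n s) (γ n t) < ε)
    (hspaced : ∃ r : ℝ, 0 < r ∧ ∀ m n : ℕ, m ≠ n → r < dist (γ m 0) (γ n 0))
    (hcauchy : ∀ ε : ℝ, 0 < ε → ∃ N : ℕ, ∀ m ≥ N, ∀ n ≥ N,
      dist (γ m 1) (γ n 1) < ε)

include hequi hspaced hcauchy in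
/-- Key claim: inside a stable set, at time `s = CASsA γ σ₁`, every infinite
subset has an infinite subset on which the points `γ n s` are `ε`-close. -/
lemma CAS_claim {σ₁ : Set ℕ} (hσ : σ₁.Infinite)
    (hstab : ∀ B, B ⊆ σ₁ → B.Infinite → CASsA γ B = CASsA γ σ₁) :
    ∀ A, A ⊆ σ₁ → A.Infinite → ∀ ε : ℝ, 0 < ε →
    ∃ B, B ⊆ A ∧ B.Infinite ∧ ∀ m ∈ B, ∀ n ∈ B, m ≠ n →
      dist (γ m (CASsA γ σ₁)) (γ n (CASsA γ σ₁)) < ε := by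
  classical
  intro A hAσ hAinf ε hε
  set s := CASsA γ σ₁ with hs
  rcases ramsey_pairs A hAinf (fun m n => dist (γ m s) (γ n s) < ε)
    (fun m n h => by simpa [dist_comm] using h) with hgood | hbad
  · exact hgood
  exfalso
  obtain ⟨M, hMA, hMinf, hM⟩ := hbad
  have hMσ : M ⊆ σ₁ := hMA.trans hAσ
  have hMdist : ∀ m ∈ M, ∀ n ∈ M, m ≠ n → ε ≤ dist (γ m s) (γ n s) :=
    fun m hm n hn hmn => not_lt.mp (hM m hm n hn hmn)
  have hsM : ∀ B, B ⊆ M → B.Infinite → CASsA γ B = s :=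
    fun B hB hBinf => hstab B (hB.trans hMσ) hBinf
  have hspos : 0 < s := by
    obtain ⟨c, hc, hc2⟩ := CASsA_pos γ hequi hspaced hσ
    linarith
  have hs1 : s ≤ 1 := CASsA_le_one γ σ₁ (CASTT_nonempty γ hequi hspaced hσ)
  rcases eq_or_lt_of_le hs1 with hseq | hslt
  · -- s = 1 : contradict the Cauchy hypothesis
    obtain ⟨N, hN⟩ := hcauchy ε hε
    obtain ⟨m, hmM, hm⟩ := hMinf.exists_gt N
    obtain ⟨n, hnM, hn⟩ := hMinf.exists_gt m
    have h1 := hN m hm.le n (hm.le.trans hn.le)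
    have h2 := hMdist m hmM n hnM hn.ne
    rw [hseq] at h2
    linarith
  -- main case : s < 1
  obtain ⟨δ, hδ, hδ2⟩ := hequi (ε/8) (by linarith)
  set t0 : ℝ := max (s - δ/2) 0 with ht0def
  set t1 : ℝ := min (s + δ/2) 1 with ht1def
  have ht00 : 0 ≤ t0 := le_max_right _ _
  have ht0s : t0 < s := max_lt (by linarith) hspos
  have hst1 : s < t1 := lt_min (by linarith) hslt
  have ht11 : t1 ≤ 1 := min_le_right _ _
  have ht01 : t0 ≤ 1 := ht0s.le.trans hs1
  have ht0t1 : t0 ≤ t1 := le_of_lt (ht0s.trans hst1)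
  have hsIcc : s ∈ Icc (0:ℝ) 1 := ⟨hspos.le, hs1⟩
  have hosc : ∀ n u, t0 ≤ u → u ≤ t1 → dist (γ n u) (γ n s) < ε/8 := by
    intro n u hu1 hu2
    apply hδ2 n u ⟨ht00.trans hu1, hu2.trans ht11⟩ s hsIcc
    rw [abs_sub_lt_iff]
    constructor
    · have : u ≤ s + δ/2 := hu2.trans (min_le_left _ _)
      linarith
    · have : s - δ/2 ≤ u := (le_max_left _ _).trans hu1
      linarith
  -- Step 5a : chain of subsets of M with all pairs coming (1/2)^k-close by time t1
  set Rclose : ℝ → ℕ → ℕ → Prop := fun β m n =>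
    ∃ u ∈ Icc (0:ℝ) t1, ∃ v ∈ Icc (0:ℝ) t1, dist (γ m u) (γ n v) ≤ β with hRdef
  have hRsymm : ∀ β m n, Rclose β m n → Rclose β n m := by
    rintro β m n ⟨u, hu, v, hv, h⟩
    exact ⟨v, hv, u, hu, by rwa [dist_comm]⟩
  obtain ⟨S5, hS50, hS5inf, hS5nest, hS5base, hQ5⟩ := chain_construction M hMinf
    (fun k _ E' => ∀ m ∈ E', ∀ n ∈ E', m ≠ n → Rclose ((1/2)^k) m n)
    (by
      intro k E hEinf hEM
      rcases ramsey_pairs E hEinf (Rclose ((1/2)^k)) (hRsymm _) with h | h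
      · obtain ⟨B, h1, h2, h3⟩ := h
        exact ⟨B, h1, h2, h3⟩
      · exfalso
        obtain ⟨B, hBE, hBinf, hB⟩ := h
        have hspB : CASSpaced γ B t1 ((1/2)^k) := by
          intro m hm n hn hmn u hu v hv
          by_contra hcon
          exact hB m hm n hn hmn ⟨u, hu, v, hv, not_lt.mp hcon⟩
        have : t1 ∈ CASTT γ B :=
          ⟨⟨ht00.trans ht0t1, ht11⟩, B, le_refl _, hBinf, (1/2)^k, by positivity, hspB⟩
        have h1 : t1 ≤ CASsA γ B := le_csSup (CASTT_bdd γ B) this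
        have h2 : CASsA γ B = s := hsM B (hBE.trans hEM) hBinf
        linarith)
  obtain ⟨c, hcmono, hcS⟩ := diagonal_construction (fun k => S5 (k+1))
    (fun k => hS5inf (k+1))
  have hcM : ∀ k, c k ∈ M := fun k => hS5base (k+1) (hcS k)
  have hpair : ∀ k l, k < l → Rclose ((1/2)^k) (c k) (c l) := by
    intro k l hkl
    have h1 : c l ∈ S5 (k+1) := nested_subset S5 hS5nest (k+1) (l+1) (by omega) (hcS l)
    exact hQ5 k (c k) (hcS k) (c l) h1 (hcmono.injective.ne hkl.ne)
  have hcinj : Function.Injective c := hcmono.injective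
  obtain ⟨K0, hK0⟩ : ∃ K0 : ℕ, ((1:ℝ)/2)^K0 < ε/8 :=
    exists_pow_lt_of_lt_one (by linarith) (by norm_num)
  have hpowK0 : ∀ k, K0 ≤ k → ((1:ℝ)/2)^k ≤ ε/8 :=
    fun k hk => le_trans (pow_le_pow_of_le_one (by norm_num) (by norm_num) hk) hK0.le
  set typeA : ℕ → ℕ → Prop := fun k l =>
    ∃ u ∈ Icc (0:ℝ) t1, ∃ v ∈ Icc (0:ℝ) t0,
      dist (γ (c k) u) (γ (c l) v) ≤ (1/2)^k with htAdef
  set typeB : ℕ → ℕ → Prop := fun k l =>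
    ∃ u ∈ Icc (0:ℝ) t0, dist (γ (c l) s) (γ (c k) u) ≤ ε/4 with htBdef
  have hAB : ∀ k l, K0 ≤ k → k < l → typeA k l ∨ typeB k l := by
    intro k l hKk hkl
    obtain ⟨u, hu, v, hv, hd⟩ := hpair k l hkl
    have hdε : dist (γ (c k) u) (γ (c l) v) ≤ ε/8 := le_trans hd (hpowK0 k hKk)
    rcases le_or_gt v t0 with hvt0 | hvt0
    · exact Or.inl ⟨u, hu, v, ⟨hv.1, hvt0⟩, hd⟩
    · have hoscl : dist (γ (c l) v) (γ (c l) s) < ε/8 := hosc (c l) v hvt0.le hv.2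
      rcases le_or_gt u t0 with hut0 | hut0
      · refine Or.inr ⟨u, ⟨hu.1, hut0⟩, ?_⟩
        have h1 : dist (γ (c l) s) (γ (c l) v) < ε/8 := by
          rw [dist_comm]; exact hoscl
        have h2 : dist (γ (c l) v) (γ (c k) u) ≤ ε/8 := by
          rw [dist_comm]; exact hdε
        have h3 := dist_triangle (γ (c l) s) (γ (c l) v) (γ (c k) u)
        linarith
      · exfalso
        have hosck : dist (γ (c k) u) (γ (c k) s) < ε/8 := hosc (c k) u hut0.le hu.2
        have hd2 : ε ≤ dist (γ (c k) s) (γ (c l) s) :=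
          hMdist _ (hcM k) _ (hcM l) (hcinj.ne hkl.ne)
        have h4 := dist_triangle4 (γ (c k) s) (γ (c k) u) (γ (c l) v) (γ (c l) s)
        have h1 : dist (γ (c k) s) (γ (c k) u) < ε/8 := by
          rw [dist_comm]; exact hosck
        linarith
  -- each typeB-set is finite by total boundedness
  have hBfin : ∀ k, {l | k < l ∧ typeB k l}.Finite := by
    intro k
    rw [← not_infinite]
    intro hLinf
    obtain ⟨Z, hZfin, hZ⟩ := CAS_net γ hequi (c k) ht01 (show (0:ℝ) < ε/8 by linarith)
    have hex : ∀ l, ∃ z, l ∈ {l | k < l ∧ typeB k l} → z ∈ Z ∧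
        dist (γ (c l) s) z ≤ ε/4 + ε/8 := by
      intro l
      by_cases hl : l ∈ {l | k < l ∧ typeB k l}
      · obtain ⟨u, hu, hud⟩ := hl.2
        rcases mem_iUnion₂.mp (hZ (mem_image_of_mem _ hu)) with ⟨z, hz, hzd⟩
        refine ⟨z, fun _ => ⟨hz, ?_⟩⟩
        have h1 := dist_triangle (γ (c l) s) (γ (c k) u) z
        have h2 : dist (γ (c k) u) z < ε/8 := mem_ball.mp hzd
        linarith
      · exact ⟨γ (c 0) s, fun h => absurd h hl⟩
    choose f hf using hex
    obtain ⟨z, hzZ, hfib⟩ := infinite_pigeonhole _ hLinf Z hZfin f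
      (fun l hl => (hf l hl).1)
    obtain ⟨l, hl, _⟩ := hfib.exists_gt 0
    obtain ⟨l', hl', hllt⟩ := hfib.exists_gt l
    have h1 := (hf l hl.1).2
    have h2 := (hf l' hl'.1).2
    rw [hl.2] at h1
    rw [hl'.2] at h2
    have h3 : ε ≤ dist (γ (c l) s) (γ (c l') s) :=
      hMdist _ (hcM l) _ (hcM l') (hcinj.ne hllt.ne)
    have h4 := dist_triangle (γ (c l) s) z (γ (c l') s)
    have h5 : dist z (γ (c l') s) ≤ ε/4 + ε/8 := by rw [dist_comm]; exact h2
    linarith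
  -- chain 5d : extraction of a family with early closeness at vanishing scales
  set eclose : ℝ → ℕ → ℕ → Prop := fun α m n =>
    ∃ u ∈ Icc (0:ℝ) t0, ∃ v ∈ Icc (0:ℝ) t0, dist (γ m u) (γ n v) ≤ α with hecdef
  obtain ⟨S6, hS60, hS6inf, hS6nest, hS6base, hQ6⟩ := chain_construction (Set.Ici K0)
    (Set.Ici_infinite K0)
    (fun _ E E' => (∀ l ∈ E', sInf E < l) ∧ ∀ l ∈ E', ∀ l' ∈ E', l ≠ l' →
      eclose (4*(1/2)^(sInf E)) (c l) (c l'))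
    (by
      intro i E hEinf hEbase
      set k0 := sInf E with hk0
      have hk0E : k0 ∈ E := Nat.sInf_mem hEinf.nonempty
      have hK0k0 : K0 ≤ k0 := hEbase hk0E
      set E0 := {l | l ∈ E ∧ k0 < l} with hE0
      have hE0inf : E0.Infinite := by
        apply Set.Infinite.mono ?_ (hEinf.diff (Set.finite_Iic k0))
        intro l hl
        exact ⟨hl.1, by simpa using hl.2⟩
      set E1 := {l | l ∈ E0 ∧ typeA k0 l} with hE1
      have hE1inf : E1.Infinite := by
        apply Set.Infinite.mono ?_ (hE0inf.diff (hBfin k0))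
        intro l hl
        refine ⟨hl.1, ?_⟩
        rcases hAB k0 l hK0k0 hl.1.2 with h | h
        · exact h
        · exact absurd ⟨hl.1.2, h⟩ hl.2
      have hexuv : ∀ l, ∃ p : ℝ × ℝ, l ∈ E1 → p.1 ∈ Icc (0:ℝ) t1 ∧
          p.2 ∈ Icc (0:ℝ) t0 ∧ dist (γ (c k0) p.1) (γ (c l) p.2) ≤ (1/2)^k0 := by
        intro l
        by_cases hl : l ∈ E1
        · obtain ⟨u, hu, v, hv, hd⟩ := hl.2
          exact ⟨(u, v), fun _ => ⟨hu, hv, hd⟩⟩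
        · exact ⟨(0,0), fun h => absurd h hl⟩
      choose uv huv using hexuv
      obtain ⟨Z, hZfin, hZ⟩ := CAS_net γ hequi (c k0) ht11
        (show (0:ℝ) < (1/2)^k0 by positivity)
      have hexz : ∀ l, ∃ z, l ∈ E1 → z ∈ Z ∧
          dist (γ (c k0) (uv l).1) z < (1/2)^k0 := by
        intro l
        by_cases hl : l ∈ E1
        · rcases mem_iUnion₂.mp (hZ (mem_image_of_mem _ (huv l hl).1)) with ⟨z, hz, hzd⟩
          exact ⟨z, fun _ => ⟨hz, mem_ball.mp hzd⟩⟩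
        · exact ⟨γ (c 0) s, fun h => absurd h hl⟩
      choose f hf using hexz
      obtain ⟨z, hzZ, hfib⟩ := infinite_pigeonhole E1 hE1inf Z hZfin f
        (fun l hl => (hf l hl).1)
      refine ⟨{l | l ∈ E1 ∧ f l = z}, ?_, hfib, ?_, ?_⟩
      · intro l hl; exact hl.1.1.1
      · intro l hl; exact hl.1.1.2
      · intro l hl l' hl' hne
        obtain ⟨hu, hv, hd⟩ := huv l hl.1
        obtain ⟨hu', hv', hd'⟩ := huv l' hl'.1
        have hz1 := (hf l hl.1).2
        have hz2 := (hf l' hl'.1).2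
        rw [hl.2] at hz1
        rw [hl'.2] at hz2
        refine ⟨(uv l).2, hv, (uv l').2, hv', ?_⟩
        have h4 := dist_triangle4 (γ (c l) (uv l).2) (γ (c k0) (uv l).1)
          (γ (c k0) (uv l').1) (γ (c l') (uv l').2)
        have e1 : dist (γ (c l) (uv l).2) (γ (c k0) (uv l).1) ≤ (1/2)^k0 := by
          rw [dist_comm]; exact hd
        have e2 := dist_triangle (γ (c k0) (uv l).1) z (γ (c k0) (uv l').1)
        have e3 : dist z (γ (c k0) (uv l').1) < (1/2)^k0 := by
          rw [dist_comm]; exact hz2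
        linarith)
  set kk : ℕ → ℕ := fun i => sInf (S6 i) with hkk
  have hkkmem : ∀ i, kk i ∈ S6 i := fun i => Nat.sInf_mem (hS6inf i).nonempty
  have hkkmono : StrictMono kk :=
    strictMono_nat_of_lt_succ (fun i => (hQ6 i).1 _ (hkkmem (i+1)))
  set phi : ℕ → ℕ := fun i => c (kk (i+1)) with hphi
  have hphimono : StrictMono phi :=
    fun i j hij => hcmono (hkkmono (by omega : i+1 < j+1))
  have hphiM : ∀ i, phi i ∈ M := fun i => hcM _
  set Phi : Set ℕ := Set.range phi with hPhi
  have hPhiinf : Phi.Infinite := Set.infinite_range_of_injective hphimono.injective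
  have hPhiM : Phi ⊆ M := by rintro x ⟨i, rfl⟩; exact hphiM i
  have hsPhi : CASsA γ Phi = s := hsM Phi hPhiM hPhiinf
  have ht0TT : t0 ∈ CASTT γ Phi :=
    CAS_mem_TT_of_lt γ hequi hspaced hPhiinf ht00 (by rw [hsPhi]; exact ht0s)
  obtain ⟨_, W, hWPhi, hWinf, r, hr, hWsp⟩ := ht0TT
  set I := {i | phi i ∈ W} with hIdef
  have hIinf : I.Infinite := by
    by_contra hIf
    rw [not_infinite] at hIf
    apply hWinf
    apply Set.Finite.subset (hIf.image phi)
    intro w hw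
    obtain ⟨i, rfl⟩ := hWPhi hw
    exact mem_image_of_mem phi hw
  obtain ⟨k', hk'⟩ : ∃ k' : ℕ, ((1:ℝ)/2)^k' < r/4 :=
    exists_pow_lt_of_lt_one (by linarith) (by norm_num)
  obtain ⟨i, hiI, hik⟩ := hIinf.exists_gt k'
  obtain ⟨j, hjI, hij⟩ := hIinf.exists_gt i
  have hmem1 : kk (i+1) ∈ S6 (i+1) := hkkmem (i+1)
  have hmem2 : kk (j+1) ∈ S6 (i+1) :=
    nested_subset S6 hS6nest (i+1) (j+1) (by omega) (hkkmem (j+1))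
  have hnekk : kk (i+1) ≠ kk (j+1) := (hkkmono (by omega : i+1 < j+1)).ne
  obtain ⟨u, hu, v, hv, hd⟩ := (hQ6 i).2 _ hmem1 _ hmem2 hnekk
  have hrd := hWsp (phi i) hiI (phi j) hjI (hphimono.injective.ne hij.ne) u hu v hv
  have hpow1 : ((1:ℝ)/2)^(kk i) ≤ (1/2)^i :=
    pow_le_pow_of_le_one (by norm_num) (by norm_num) (hkkmono.le_apply)
  have hpow2 : ((1:ℝ)/2)^i ≤ (1/2)^k' :=
    pow_le_pow_of_le_one (by norm_num) (by norm_num) hik.le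
  linarith
end CAS4


/-- Given an equicontinuous sequence of arcs whose starting points form a
spaced set and whose endpoints form a Cauchy sequence, there are `s ∈ (0,1]`
and an infinite `σ ⊆ ℕ` such that `(γₙ(s))_{n ∈ σ}` is Cauchy and for every
`t < s` the family `{γₙ([0,t]) : n ∈ σ}` is almost spaced. -/
theorem cauchy_almost_spaced (X : Type) [MetricSpace X] (γ : ℕ → ℝ → X)
    (hequi : ∀ ε : ℝ, 0 < ε → ∃ δ : ℝ, 0 < δ ∧
      ∀ n : ℕ, ∀ s ∈ Set.Icc (0:ℝ) 1, ∀ t ∈ Set.Icc (0:ℝ) 1,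
        |s - t| < δ → dist (γ n s) (γ n t) < ε)
    (hspaced : ∃ r : ℝ, 0 < r ∧ ∀ m n : ℕ, m ≠ n → r < dist (γ m 0) (γ n 0))
    (hcauchy : ∀ ε : ℝ, 0 < ε → ∃ N : ℕ, ∀ m ≥ N, ∀ n ≥ N,
      dist (γ m 1) (γ n 1) < ε) :
    ∃ s ∈ Set.Ioc (0:ℝ) 1, ∃ σ : Set ℕ, σ.Infinite ∧
      (∀ ε : ℝ, 0 < ε → ∃ N : ℕ, ∀ m ∈ σ, ∀ n ∈ σ, N ≤ m → N ≤ n →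
        dist (γ m s) (γ n s) < ε) ∧
      ∀ t : ℝ, 0 ≤ t → t < s →
        ∃ r' : ℝ, 0 < r' ∧ ∃ η : Set ℕ, η.Finite ∧
          ∀ m ∈ σ \ η, ∀ n ∈ σ \ η, m ≠ n →
            ∀ a ∈ γ m '' Set.Icc (0:ℝ) t, ∀ b ∈ γ n '' Set.Icc (0:ℝ) t,
              r' < dist a b := by
  classical
  obtain ⟨σ₁, hσ, hstab⟩ := CAS_exists_sigma1 γ hequi hspaced
  set s := CASsA γ σ₁ with hsdef
  have hspos : 0 < s := by
    obtain ⟨c, hc, hc2⟩ := CASsA_pos γ hequi hspaced hσ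
    linarith
  have hs1 : s ≤ 1 := CASsA_le_one γ σ₁ (CASTT_nonempty γ hequi hspaced hσ)
  have claim := CAS_claim γ hequi hspaced hcauchy hσ hstab
  -- chain combining spacedness below s and closeness at s
  obtain ⟨S7, hS70, hS7inf, hS7nest, hS7base, hQ7⟩ := chain_construction σ₁ hσ
    (fun k _ E' => (∃ r > 0, CASSpaced γ E' (s - s/(k+2)) r) ∧
      ∀ m ∈ E', ∀ n ∈ E', m ≠ n → dist (γ m s) (γ n s) < 1/(k+1))
    (by
      intro k E hEinf hEσ
      have hsE : CASsA γ E = s := hstab E hEσ hEinf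
      have htk0 : (0:ℝ) ≤ s - s/(k+2) := by
        have h1 : s/(k+2) ≤ s/1 := by
          apply div_le_div_of_nonneg_left hspos.le one_pos
          exact_mod_cast Nat.le_add_left 1 (k+1)
        simp only [div_one] at h1
        linarith
      have htks : s - s/(k+2) < s := by
        have : (0:ℝ) < s/(k+2) := by positivity
        linarith
      have htkTT : s - s/(k+2) ∈ CASTT γ E :=
        CAS_mem_TT_of_lt γ hequi hspaced hEinf htk0 (by rw [hsE]; exact htks)
      obtain ⟨_, B, hBE, hBinf, r, hrpos, hBsp⟩ := htkTT
      obtain ⟨B', hB'B, hB'inf, hB'⟩ := claim B (hBE.trans hEσ) hBinf (1/(k+1))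
        (by positivity)
      exact ⟨B', hB'B.trans hBE, hB'inf,
        ⟨r, hrpos, CASSpaced_mono γ hB'B hBsp⟩, hB'⟩)
  obtain ⟨a, hamono, haS⟩ := diagonal_construction (fun k => S7 (k+1))
    (fun k => hS7inf (k+1))
  refine ⟨s, ⟨hspos, hs1⟩, Set.range a,
    Set.infinite_range_of_injective hamono.injective, ?_, ?_⟩
  · -- Cauchy condition at s
    intro ε hε
    obtain ⟨k, hk⟩ := exists_nat_one_div_lt hε
    refine ⟨a k, ?_⟩
    rintro m ⟨i, rfl⟩ n ⟨j, rfl⟩ hi hj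
    rcases eq_or_ne (a i) (a j) with heq | hne
    · rw [heq, dist_self]; exact hε
    have hik : k ≤ i := hamono.le_iff_le.mp hi
    have hjk : k ≤ j := hamono.le_iff_le.mp hj
    have hmi : a i ∈ S7 (k+1) :=
      nested_subset S7 hS7nest (k+1) (i+1) (by omega) (haS i)
    have hmj : a j ∈ S7 (k+1) :=
      nested_subset S7 hS7nest (k+1) (j+1) (by omega) (haS j)
    have := (hQ7 k).2 (a i) hmi (a j) hmj hne
    linarith
  · -- almost spaced below s
    intro t ht0 hts
    have hst : 0 < s - t := by linarith
    obtain ⟨k, hk⟩ := exists_nat_ge (s/(s-t))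
    have htk : t ≤ s - s/(k+2) := by
      have h2 : s ≤ (s-t)*(k+2) := by
        have h3 : s/(s-t) ≤ (k:ℝ)+2 := by
          have : (k:ℝ) ≤ (k:ℝ)+2 := by linarith
          linarith
        calc s = (s/(s-t))*(s-t) := by field_simp
        _ ≤ ((k:ℝ)+2)*(s-t) := by
            apply mul_le_mul_of_nonneg_right h3 hst.le
        _ = (s-t)*((k:ℝ)+2) := by ring
      have h4 : s/((k:ℝ)+2) ≤ s-t := by
        rw [div_le_iff₀ (by positivity)]
        linarith
      have : ((k:ℕ)+2:ℝ) = (k:ℝ)+2 := by push_cast; ring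
      linarith [h4]
    obtain ⟨r, hrpos, hrsp⟩ := (hQ7 k).1
    refine ⟨r, hrpos, {n | n < a k}, Set.finite_Iio (a k), ?_⟩
    rintro m ⟨⟨i, rfl⟩, hm2⟩ n ⟨⟨j, rfl⟩, hn2⟩ hne x hx y hy
    have hik : k ≤ i := hamono.le_iff_le.mp (not_lt.mp hm2)
    have hjk : k ≤ j := hamono.le_iff_le.mp (not_lt.mp hn2)
    have hmi : a i ∈ S7 (k+1) :=
      nested_subset S7 hS7nest (k+1) (i+1) (by omega) (haS i)
    have hmj : a j ∈ S7 (k+1) :=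
      nested_subset S7 hS7nest (k+1) (j+1) (by omega) (haS j)
    obtain ⟨u, hu, rfl⟩ := hx
    obtain ⟨v, hv, rfl⟩ := hy
    have hu' : u ∈ Icc (0:ℝ) (s - s/(k+2)) := ⟨hu.1, hu.2.trans htk⟩
    have hv' : v ∈ Icc (0:ℝ) (s - s/(k+2)) := ⟨hv.1, hv.2.trans htk⟩
    exact hrsp (a i) hmi (a j) hmj hne u hu' v hv'
end

section
/- Every nonempty open subset X of the Urysohn space 𝕌 is DPT and CP1: for every x ∈ X there are a neighborhood U of x and K ≥ 1 such that for all y, z ∈ U and every d ∈ (0, d(y,z)) there exist n ∈ ℕ and points u₀,…,uₙ ∈ X with n ≤ K·d(y,z)/d, d(y,u₀) < d, d(uₙ,z) < d, and d(u_{i−1},u_i) = d for i = 1,…,n; and for every x ∈ X and r > 0 there is r* ∈ (0,r) such that for all x' ∈ X and r' > 0 with B(x',r') ⊆ B(x,r*), every connected component C of B(x,r) ∖ B(x',r') intersects B(x,r) ∖ B(x,r*). -/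
/-!
Any two points `p, q` of the Urysohn space lie on an isometric copy of `ℝ`: universality embeds
`ℝ`, and ultrahomogeneity moves the images of `0` and `d(p, q)` onto `p` and `q`. Near a point of
the open set `X`, the points `γ (i * d)` of such a segment from `y` to `z` form the chains
required by DPT (with `K = 1`). For CP1, the line from `x'` through `z`, continued beyond `z`,
moves away from `x'` at unit speed, so it stays outside `B(x', r')`; with `r* = min(ε, r) / 3`,
where `B(x, ε) ⊆ X`, it leaves `B(x, r*)` (at distance `2r*` from `x'`) before it can leave
`B(x, r)` or `X`.
-/

open Metric Set

/-- The Urysohn space: a complete separable metric space which is universal for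
separable metric spaces and finitely ultrahomogeneous. -/
def IsUrysohn (U : Type) [MetricSpace U] : Prop :=
  CompleteSpace U ∧ TopologicalSpace.SeparableSpace U ∧
  (∀ (Y : Type) [MetricSpace Y] [TopologicalSpace.SeparableSpace Y],
      ∃ f : Y → U, Isometry f) ∧
  (∀ (A : Set U) (f : U → U), A.Finite →
      (∀ u ∈ A, ∀ v ∈ A, dist (f u) (f v) = dist u v) →
      ∃ g : U ≃ᵢ U, ∀ u ∈ A, g u = f u)

def DPTAt {X : Type*} [PseudoMetricSpace X] (x : X) : Prop :=
  ∃ V : Set X, V ∈ nhds x ∧ ∃ K : ℝ, 1 ≤ K ∧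
    ∀ y ∈ V, ∀ z ∈ V, ∀ d : ℝ, 0 < d → d < dist y z →
      ∃ n : ℕ, ∃ u : ℕ → X,
        (n : ℝ) ≤ K * dist y z / d ∧
        dist y (u 0) < d ∧ dist (u n) z < d ∧
        ∀ i : ℕ, 1 ≤ i → i ≤ n → dist (u (i - 1)) (u i) = d

def CP1At {X : Type*} [PseudoMetricSpace X] (x : X) : Prop :=
  ∀ r : ℝ, 0 < r → ∃ rs : ℝ, 0 < rs ∧ rs < r ∧
    ∀ x' : X, ∀ r' : ℝ, 0 < r' → ball x' r' ⊆ ball x rs →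
      ∀ z ∈ ball x r \ ball x' r',
        (connectedComponentIn (ball x r \ ball x' r') z ∩ (ball x r \ ball x rs)).Nonempty

def HasIsometricLines (M : Type*) [PseudoMetricSpace M] : Prop :=
  ∀ p q : M, ∃ Q : ℝ → M, Isometry Q ∧ Q 0 = p ∧ Q (dist p q) = q

/-- The chain consists of the points `γ (i * d)`, `i ≤ ⌊L / d⌋`. -/
theorem exists_chain_of_segment {X : Type*} [PseudoMetricSpace X] {γ : ℝ → X} {L d : ℝ}
    (hγ : ∀ s ∈ Icc 0 L, ∀ t ∈ Icc 0 L, dist (γ s) (γ t) = |s - t|) (hL : 0 ≤ L) (hd : 0 < d) :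
    ∃ n : ℕ, ∃ u : ℕ → X, (n : ℝ) ≤ L / d ∧ dist (γ 0) (u 0) < d ∧ dist (u n) (γ L) < d ∧
      ∀ i : ℕ, 1 ≤ i → i ≤ n → dist (u (i - 1)) (u i) = d := by
  set n := ⌊L / d⌋₊
  have hn_le : (n : ℝ) * d ≤ L := (le_div_iff₀ hd).1 (Nat.floor_le (div_nonneg hL hd.le))
  have hn_lt : L < (n + 1) * d := (div_lt_iff₀ hd).1 (Nat.lt_floor_add_one _)
  have hmem : ∀ i ≤ n, (i : ℝ) * d ∈ Icc 0 L := fun i hi =>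
    ⟨by positivity, le_trans (by gcongr) hn_le⟩
  refine ⟨n, fun i => γ ((min i n : ℕ) * d), (le_div_iff₀ hd).2 hn_le, ?_, ?_, ?_⟩
  · simpa using hd
  · show dist (γ ((min n n : ℕ) * d)) (γ L) < d
    rw [min_self, hγ _ (hmem n le_rfl) _ ⟨hL, le_rfl⟩, abs_sub_comm, abs_of_nonneg (by linarith)]
    linarith
  · intro i hi hin
    simp only [min_eq_left hin, min_eq_left (i.sub_le 1 |>.trans hin)]
    rw [hγ _ (hmem _ (i.sub_le 1 |>.trans hin)) _ (hmem i hin), Nat.cast_sub hi]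
    simp [← sub_mul, hd.le]

theorem DPTAt.of_forall_segment {X : Type*} [PseudoMetricSpace X] {x : X} {V : Set X}
    (hV : V ∈ nhds x)
    (hseg : ∀ y ∈ V, ∀ z ∈ V, ∃ γ : ℝ → X,
      (∀ s ∈ Icc 0 (dist y z), ∀ t ∈ Icc 0 (dist y z), dist (γ s) (γ t) = |s - t|) ∧
        γ 0 = y ∧ γ (dist y z) = z) :
    DPTAt x := by
  refine ⟨V, hV, 1, le_rfl, fun y hy z hz d hd _ => ?_⟩
  obtain ⟨γ, hγ, hγ0, hγL⟩ := hseg y hy z hz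
  obtain ⟨n, u, hn, h0, hL, hstep⟩ := exists_chain_of_segment hγ dist_nonneg hd
  rw [hγ0, hγL] at *
  exact ⟨n, u, by rwa [one_mul], h0, hL, hstep⟩

theorem IsUrysohn.exists_isometry_extend {U : Type} [MetricSpace U] (hU : IsUrysohn U)
    {Y : Type} [MetricSpace Y] [TopologicalSpace.SeparableSpace Y] {A : Set Y} (hA : A.Finite)
    (f : Y → U) (hf : ∀ a ∈ A, ∀ b ∈ A, dist (f a) (f b) = dist a b) :
    ∃ F : Y → U, Isometry F ∧ ∀ a ∈ A, F a = f a := by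
  obtain ⟨-, -, huniv, hhom⟩ := hU
  obtain ⟨e, he⟩ := huniv Y
  have hext : ∀ a, Function.extend e f id (e a) = f a := he.injective.extend_apply f id
  obtain ⟨g, hg⟩ := hhom (e '' A) (Function.extend e f id) (hA.image e) (by
    rintro _ ⟨a, ha, rfl⟩ _ ⟨b, hb, rfl⟩
    rw [hext, hext, he.dist_eq, hf a ha b hb])
  exact ⟨g ∘ e, g.isometry.comp he, fun a ha => (hg (e a) (mem_image_of_mem e ha)).trans (hext a)⟩

theorem IsUrysohn.hasIsometricLines {U : Type} [MetricSpace U] (hU : IsUrysohn U) :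
    HasIsometricLines U := by
  intro p q
  set f : ℝ → U := fun t => if t = 0 then p else q
  have hf0 : f 0 = p := if_pos rfl
  have hfL : f (dist p q) = q := by
    by_cases h : dist p q = 0
    · rw [h, hf0, dist_eq_zero.1 h]
    · exact if_neg h
  obtain ⟨Q, hQ, hQf⟩ := hU.exists_isometry_extend (A := {0, dist p q}) (toFinite _) f (by
    rintro a (rfl | rfl) b (rfl | rfl) <;> simp [hf0, hfL, Real.dist_eq, dist_comm q p])
  exact ⟨Q, hQ, (hQf 0 (by simp)).trans hf0, (hQf _ (by simp)).trans hfL⟩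

section OpenSubset

variable {M : Type*} [PseudoMetricSpace M] {X : Set M}

/-- An isometric line through `p` and `q`, clamped to `[0, T]` so that it takes values in `X`. -/
theorem HasIsometricLines.exists_segment (hM : HasIsometricLines M) (p q : X) {T : ℝ}
    (hpq : dist p q ≤ T) (hT : closedBall (p : M) T ⊆ X) :
    ∃ γ : ℝ → X, Continuous γ ∧
      (∀ s ∈ Icc 0 T, ∀ t ∈ Icc 0 T, dist (γ s) (γ t) = |s - t|) ∧
      γ 0 = p ∧ γ (dist p q) = q := by
  obtain ⟨Q, hQ, hQ0, hQq⟩ := hM p q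
  have h0T : 0 ≤ T := dist_nonneg.trans hpq
  have hmaps : MapsTo Q (Icc 0 T) X := fun s hs => hT <| by
    rw [mem_closedBall, ← hQ0, hQ.dist_eq, Real.dist_eq, sub_zero, abs_of_nonneg hs.1]
    exact hs.2
  have hγ : ∀ s (hs : s ∈ Icc 0 T), IccExtend h0T (hmaps.restrict Q _ _) s = ⟨Q s, hmaps hs⟩ :=
    fun s hs => IccExtend_of_mem h0T _ hs
  refine ⟨IccExtend h0T (hmaps.restrict Q _ _),
    continuous_IccExtend_iff.2 (hQ.continuous.restrict hmaps), fun s hs t ht => ?_, ?_, ?_⟩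
  · rw [hγ s hs, hγ t ht, Subtype.dist_eq, hQ.dist_eq, Real.dist_eq]
  · exact Subtype.ext ((congrArg Subtype.val (hγ 0 ⟨le_rfl, h0T⟩)).trans hQ0)
  · exact Subtype.ext ((congrArg Subtype.val (hγ _ ⟨dist_nonneg, hpq⟩)).trans hQq)

theorem HasIsometricLines.dptAt_of_isOpen (hM : HasIsometricLines M) (hX : IsOpen X) (x : X) :
    DPTAt x := by
  obtain ⟨ε, hε, hball⟩ := Metric.isOpen_iff.1 hX x.1 x.2
  refine DPTAt.of_forall_segment (ball_mem_nhds x (by positivity : 0 < ε / 3))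
    fun y hy z hz => ?_
  obtain ⟨γ, -, hγ⟩ := hM.exists_segment y z le_rfl fun w hw => hball <| by
    have hy : dist (y : M) x < ε / 3 := hy
    have hz : dist (z : M) x < ε / 3 := hz
    have hw : dist w y ≤ dist (y : M) z := hw
    rw [mem_ball]
    linarith [mem_closedBall.1 hw, dist_triangle w y x, dist_triangle_right (y : M) z x]
  exact ⟨γ, hγ⟩

theorem HasIsometricLines.cp1At_of_isOpen (hM : HasIsometricLines M) (hX : IsOpen X) (x : X) :
    CP1At x := by
  intro r hr
  obtain ⟨ε, hε, hball⟩ := Metric.isOpen_iff.1 hX x.1 x.2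
  obtain ⟨ρ, hρ, hρε, hρr⟩ : ∃ ρ > 0, 3 * ρ ≤ ε ∧ 3 * ρ ≤ r :=
    ⟨min ε r / 3, by positivity, by linarith [min_le_left ε r], by linarith [min_le_right ε r]⟩
  refine ⟨ρ, hρ, by linarith, fun x' r' hr' hsub z hz => ?_⟩
  by_cases hzρ : z ∈ ball x ρ
  swap
  · exact ⟨z, mem_connectedComponentIn hz, hz.1, hzρ⟩
  have hx' : dist (x' : M) x < ρ := hsub (mem_ball_self hr')
  have hz' : r' ≤ dist (z : M) x' := not_lt.1 hz.2
  have hx'z : dist x' z < 2 * ρ := by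
    show dist (x' : M) z < 2 * ρ
    have hzρ : dist (z : M) x < ρ := hzρ
    linarith [dist_triangle_right (x' : M) z x]
  obtain ⟨γ, hγc, hγ, hγ0, hγz⟩ := hM.exists_segment x' z hx'z.le fun w hw => hball <| by
    rw [mem_ball]
    linarith [dist_triangle w x' x, mem_closedBall.1 hw]
  have hdist : ∀ s ∈ Icc (dist x' z) (2 * ρ), dist (γ s : M) x' = s := fun s hs => by
    have hs0 : 0 ≤ s := dist_nonneg.trans hs.1
    rw [← hγ0, ← Subtype.dist_eq, hγ s ⟨hs0, hs.2⟩ 0 ⟨le_rfl, by positivity⟩, sub_zero,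
      abs_of_nonneg hs0]
  have hconn : IsPreconnected (γ '' Icc (dist x' z) (2 * ρ)) :=
    isPreconnected_Icc.image γ hγc.continuousOn
  have hsub' : γ '' Icc (dist x' z) (2 * ρ) ⊆ ball x r \ ball x' r' := by
    rintro _ ⟨s, hs, rfl⟩
    have hγs := hdist s hs
    refine ⟨?_, fun h => ?_⟩
    · show dist (γ s : M) x < r
      linarith [dist_triangle (γ s : M) x' x, hs.2]
    · have h : dist (γ s : M) x' < r' := h
      have hs1 : dist (x' : M) z ≤ s := hs.1
      linarith [dist_comm (x' : M) z]
  have hend : 2 * ρ ∈ Icc (dist x' z) (2 * ρ) := ⟨hx'z.le, le_rfl⟩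
  refine ⟨γ (2 * ρ), hconn.subset_connectedComponentIn ⟨dist x' z, ⟨le_rfl, hx'z.le⟩, hγz⟩ hsub'
    (mem_image_of_mem γ hend), (hsub' (mem_image_of_mem γ hend)).1, fun h => ?_⟩
  have h : dist (γ (2 * ρ) : M) x < ρ := h
  linarith [dist_triangle (γ (2 * ρ) : M) x x', hdist _ hend, dist_comm (x : M) x']

end OpenSubset

theorem open_subset_DPT_and_CP1_general (U : Type) [MetricSpace U] (hU : IsUrysohn U)
    (X : Set U) (hX : IsOpen X) :
    (∀ x : X, ∃ V : Set X, V ∈ nhds x ∧ ∃ K : ℝ, 1 ≤ K ∧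
      ∀ y ∈ V, ∀ z ∈ V, ∀ d : ℝ, 0 < d → d < dist y z →
        ∃ n : ℕ, ∃ u : ℕ → X,
          (n : ℝ) ≤ K * dist y z / d ∧
          dist y (u 0) < d ∧ dist (u n) z < d ∧
          ∀ i : ℕ, 1 ≤ i → i ≤ n → dist (u (i - 1)) (u i) = d) ∧
    (∀ x : X, ∀ r : ℝ, 0 < r → ∃ rs : ℝ, 0 < rs ∧ rs < r ∧
      ∀ x' : X, ∀ r' : ℝ, 0 < r' → ball x' r' ⊆ ball x rs →
        ∀ z ∈ ball x r \ ball x' r',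
          (connectedComponentIn (ball x r \ ball x' r') z ∩
            (ball x r \ ball x rs)).Nonempty) :=
  ⟨hU.hasIsometricLines.dptAt_of_isOpen hX, hU.hasIsometricLines.cp1At_of_isOpen hX⟩

/-- Every nonempty open subset `X` of the Urysohn space (with the induced
metric) is DPT (discrete path property) and CP1 (connectivity property 1). -/
theorem open_subset_DPT_and_CP1 (U : Type) [MetricSpace U] (hU : IsUrysohn U)
    (X : Set U) (hX : IsOpen X) (hXne : X.Nonempty) :
    (∀ x : X, ∃ V : Set X, V ∈ nhds x ∧ ∃ K : ℝ, 1 ≤ K ∧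
      ∀ y ∈ V, ∀ z ∈ V, ∀ d : ℝ, 0 < d → d < dist y z →
        ∃ n : ℕ, ∃ u : ℕ → X,
          (n : ℝ) ≤ K * dist y z / d ∧
          dist y (u 0) < d ∧ dist (u n) z < d ∧
          ∀ i : ℕ, 1 ≤ i → i ≤ n → dist (u (i - 1)) (u i) = d) ∧
    (∀ x : X, ∀ r : ℝ, 0 < r → ∃ rs : ℝ, 0 < rs ∧ rs < r ∧
      ∀ x' : X, ∀ r' : ℝ, 0 < r' → ball x' r' ⊆ ball x rs →
        ∀ z ∈ ball x r \ ball x' r',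
          (connectedComponentIn (ball x r \ ball x' r') z ∩
            (ball x r \ ball x rs)).Nonempty) :=
  open_subset_DPT_and_CP1_general U hU X hX
end

section
/- Let X be a nonempty open subset of the Urysohn space 𝕌, and let LIP^id(X) be the group of restrictions to X of bilipschitz bijections of 𝕌 that are the identity on 𝕌 ∖ X, equipped with the topology inherited from (LIP(𝕌), d̂). Then for every u ∈ X and every neighborhood V of the identity in LIP^id(X) there exists a neighborhood U of u in X such that for all x₁, y₁, x₂, y₂ ∈ U with d(x₁,y₁) = d(x₂,y₂), there is g ∈ V with g(x₁) = x₂ and g(y₁) = y₂. In particular LIP^id(X) is affine-like. -/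
open Metric Set
open scoped Classical

/-- A bilipschitz auto-homeomorphism of a metric space `X`. -/
structure Bilip (X : Type) [MetricSpace X] where
  toFun : X → X
  invFun : X → X
  left_inv : Function.LeftInverse invFun toFun
  right_inv : Function.RightInverse invFun toFun
  bilip : ∃ K : ℝ, 1 ≤ K ∧ ∀ u v : X,
    (1 / K) * dist u v ≤ dist (toFun u) (toFun v) ∧
    dist (toFun u) (toFun v) ≤ K * dist u v

namespace Bilip

variable {X : Type} [MetricSpace X]

/-- The set of bilipschitz constants of a map. -/
def lipSet (h : X → X) : Set ℝ :=
  {K | 1 ≤ K ∧ ∀ u v : X,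
    (1 / K) * dist u v ≤ dist (h u) (h v) ∧ dist (h u) (h v) ≤ K * dist u v}

/-- `lip(h)`: the least bilipschitz constant of `h`. -/
noncomputable def lipConst (h : X → X) : ℝ := sInf (lipSet h)

/-- The semimetric `d_L(f,g) = log lip(f⁻¹ ∘ g)`. -/
noncomputable def dL (f g : Bilip X) : ℝ := Real.log (lipConst (f.invFun ∘ g.toFun))

/-- The semimetric `d_n(f,g) = sup {d(f x, g x) : x ∈ B(x₀, n)}`. -/
noncomputable def dn (x₀ : X) (n : ℕ) (f g : Bilip X) : ℝ :=
  sSup ((fun x => dist (f.toFun x) (g.toFun x)) '' ball x₀ n)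

/-- The semimetric `d_S(f,g) = Σ_n d_n(f,g) / 2ⁿ`. -/
noncomputable def dS (x₀ : X) (f g : Bilip X) : ℝ := ∑' n : ℕ, dn x₀ n f g / 2 ^ n

/-- The metric `d̂ = max(d_L, d_S)`. -/
noncomputable def dHat (x₀ : X) (f g : Bilip X) : ℝ := max (dL f g) (dS x₀ f g)

/-- Composition of bilipschitz homeomorphisms: `(f.comp g) x = f (g x)`. -/
noncomputable def comp (f g : Bilip X) : Bilip X where
  toFun := f.toFun ∘ g.toFun
  invFun := g.invFun ∘ f.invFun
  left_inv := fun x => by simp [f.left_inv _, g.left_inv _]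
  right_inv := fun x => by simp [f.right_inv _, g.right_inv _]
  bilip := by
    obtain ⟨K, hK1, hK⟩ := f.bilip
    obtain ⟨L, hL1, hL⟩ := g.bilip
    have hK0 : (0:ℝ) < K := lt_of_lt_of_le one_pos hK1
    have hL0 : (0:ℝ) < L := lt_of_lt_of_le one_pos hL1
    refine ⟨K * L, by nlinarith, fun u v => ?_⟩
    have h1 := hK (g.toFun u) (g.toFun v)
    have h2 := hL u v
    constructor
    · calc (1 / (K * L)) * dist u v = (1 / K) * ((1 / L) * dist u v) := by
            ring
        _ ≤ (1 / K) * dist (g.toFun u) (g.toFun v) := by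
            apply mul_le_mul_of_nonneg_left h2.1 (by positivity)
        _ ≤ dist (f.toFun (g.toFun u)) (f.toFun (g.toFun v)) := h1.1
    · calc dist (f.toFun (g.toFun u)) (f.toFun (g.toFun v))
          ≤ K * dist (g.toFun u) (g.toFun v) := h1.2
        _ ≤ K * (L * dist u v) := by
            apply mul_le_mul_of_nonneg_left h2.2 (le_of_lt hK0)
        _ = (K * L) * dist u v := by ring

/-- The inverse of a bilipschitz homeomorphism. -/
noncomputable def inv (f : Bilip X) : Bilip X where
  toFun := f.invFun
  invFun := f.toFun
  left_inv := f.right_inv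
  right_inv := f.left_inv
  bilip := by
    obtain ⟨K, hK1, hK⟩ := f.bilip
    have hK0 : (0:ℝ) < K := lt_of_lt_of_le one_pos hK1
    refine ⟨K, hK1, fun u v => ?_⟩
    have h := hK (f.invFun u) (f.invFun v)
    rw [f.right_inv u, f.right_inv v] at h
    constructor
    · rw [one_div, inv_mul_le_iff₀ hK0]
      exact h.2
    · have := h.1
      rw [one_div, inv_mul_le_iff₀ hK0] at this
      nlinarith [this]

/-- The identity as a bilipschitz homeomorphism. -/
noncomputable def one : Bilip X where
  toFun := id
  invFun := id
  left_inv := fun _ => rfl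
  right_inv := fun _ => rfl
  bilip := ⟨1, le_refl 1, fun u v => by norm_num⟩

end Bilip

section Realize

variable {U : Type} [MetricSpace U]

/-- One-point realization: any finite Katětov data over a finite subset of an
Urysohn space is realized by an actual point. -/
lemma IsUrysohn.realize (hU : IsUrysohn U) (T : Finset U) (κ : U → ℝ)
    (h0 : ∀ q ∈ T, 0 ≤ κ q)
    (hlip : ∀ q ∈ T, ∀ q' ∈ T, |κ q - κ q'| ≤ dist q q')
    (hsum : ∀ q ∈ T, ∀ q' ∈ T, dist q q' ≤ κ q + κ q')
    (hT : T.Nonempty) :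
    ∃ w : U, ∀ q ∈ T, dist w q = κ q := by
  classical
  by_cases hz : ∃ q ∈ T, κ q = 0
  · obtain ⟨q₀, hq₀, hk0⟩ := hz
    refine ⟨q₀, fun q hq => le_antisymm ?_ ?_⟩
    · have h1 := hsum q₀ hq₀ q hq
      rw [hk0] at h1
      simpa using h1
    · have h2 := hlip q hq q₀ hq₀
      rw [hk0] at h2
      have := abs_le.1 h2
      have h3 : κ q - 0 ≤ dist q q₀ := this.2
      rw [dist_comm]
      simpa using h3
  · push_neg at hz
    have hpos : ∀ q ∈ T, 0 < κ q := fun q hq => lt_of_le_of_ne (h0 q hq) (Ne.symm (hz q hq))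
    let S := {q : U // q ∈ T}
    let d : Option S → Option S → ℝ := fun y₁ y₂ =>
      match y₁, y₂ with
      | some a, some b => dist a.1 b.1
      | some a, none => κ a.1
      | none, some b => κ b.1
      | none, none => 0
    letI : MetricSpace (Option S) :=
      { dist := d
        dist_self := by rintro (_|a) <;> simp [d]
        dist_comm := by rintro (_|a) (_|b) <;> simp [d, dist_comm]
        dist_triangle := by
          rintro (_|a) (_|b) (_|c) <;> simp only [d]
          · linarith
          · linarith [hpos c.1 c.2]
          · linarith [hpos b.1 b.2]
          · have := abs_le.1 (hlip c.1 c.2 b.1 b.2)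
            rw [dist_comm]
            linarith
          · linarith [hpos a.1 a.2]
          · exact hsum a.1 a.2 c.1 c.2
          · have := abs_le.1 (hlip a.1 a.2 b.1 b.2)
            linarith
          · exact dist_triangle _ _ _
        eq_of_dist_eq_zero := by
          rintro (_|a) (_|b) h <;> simp only [d] at h
          · rfl
          · exact absurd h (hpos b.1 b.2).ne'
          · exact absurd h (hpos a.1 a.2).ne'
          · exact congrArg some (Subtype.ext (eq_of_dist_eq_zero h)) }
    obtain ⟨f, hf⟩ := hU.2.2.1 (Option S)
    have hfd : ∀ y₁ y₂ : Option S, dist (f y₁) (f y₂) = d y₁ y₂ := fun y₁ y₂ => hf.dist_eq y₁ y₂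
    have hfinj : Function.Injective f := hf.injective
    let F : U → U := fun v => if h : ∃ a : S, f (some a) = v then (Classical.choose h).1 else v
    have hFval : ∀ a : S, F (f (some a)) = a.1 := by
      intro a
      have h : ∃ a' : S, f (some a') = f (some a) := ⟨a, rfl⟩
      have hch : Classical.choose h = a := by
        have hs := Classical.choose_spec h
        have := hfinj hs
        exact Option.some_injective _ this
      simp only [F, dif_pos h, hch]
    have hFiso : ∀ v ∈ Set.range (fun a : S => f (some a)),
        ∀ v' ∈ Set.range (fun a : S => f (some a)), dist (F v) (F v') = dist v v' := by
      rintro _ ⟨a, rfl⟩ _ ⟨b, rfl⟩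
      rw [hFval a, hFval b, hfd (some a) (some b)]
    obtain ⟨γ, hγ⟩ := hU.2.2.2 _ F (Set.finite_range _) hFiso
    refine ⟨γ (f none), fun q hq => ?_⟩
    have hq' : γ (f (some ⟨q, hq⟩)) = q := by
      rw [hγ _ ⟨⟨q, hq⟩, rfl⟩, hFval ⟨q, hq⟩]
    calc dist (γ (f none)) q = dist (γ (f none)) (γ (f (some ⟨q, hq⟩))) := by rw [hq']
      _ = dist (f none) (f (some ⟨q, hq⟩)) := γ.dist_eq _ _
      _ = κ q := hfd none (some ⟨q, hq⟩)

end Realize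
section Step

variable {U : Type} [MetricSpace U]

/-- The invariant maintained by the back-and-forth construction: `P` is a finite
set of pairs (the graph of a finite partial map) which is `K`-bilipschitz (A),
`K`-bilipschitz against all points outside the ball `B(u, ρS)` fixed pointwise (B),
and has displacement controlled by distance to the sphere on both sides (R). -/
def Good (K ρS β : ℝ) (u : U) (P : Finset (U × U)) : Prop :=
  (∀ p ∈ P, ∀ q ∈ P, dist p.2 q.2 ≤ K * dist p.1 q.1 ∧ dist p.1 q.1 ≤ K * dist p.2 q.2) ∧
  (∀ p ∈ P, ∀ q : U, ρS ≤ dist q u →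
      dist p.2 q ≤ K * dist p.1 q ∧ dist p.1 q ≤ K * dist p.2 q) ∧
  (∀ p ∈ P, dist p.1 p.2 ≤ β * max 0 (ρS - dist p.1 u) ∧
      dist p.1 p.2 ≤ β * max 0 (ρS - dist p.2 u))

lemma Good.swap {K ρS β : ℝ} {u : U} {P : Finset (U × U)} (h : Good K ρS β u P) :
    Good K ρS β u (P.image Prod.swap) := by
  classical
  obtain ⟨hA, hB, hR⟩ := h
  refine ⟨?_, ?_, ?_⟩
  · intro p hp q hq
    obtain ⟨p₀, hp₀, rfl⟩ := Finset.mem_image.1 hp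
    obtain ⟨q₀, hq₀, rfl⟩ := Finset.mem_image.1 hq
    exact ⟨(hA p₀ hp₀ q₀ hq₀).2, (hA p₀ hp₀ q₀ hq₀).1⟩
  · intro p hp q hq
    obtain ⟨p₀, hp₀, rfl⟩ := Finset.mem_image.1 hp
    exact ⟨(hB p₀ hp₀ q hq).2, (hB p₀ hp₀ q hq).1⟩
  · intro p hp
    obtain ⟨p₀, hp₀, rfl⟩ := Finset.mem_image.1 hp
    have := hR p₀ hp₀
    exact ⟨by rw [Prod.snd_swap, Prod.fst_swap, dist_comm]; exact this.2,
      by rw [Prod.snd_swap, Prod.fst_swap, dist_comm]; exact this.1⟩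

set_option maxHeartbeats 1000000 in
lemma step_forward (hU : IsUrysohn U) {K ρS β : ℝ} (hK : 1 < K) (hρ : 0 < ρS)
    (hβ : β = (K - 1) / (K * K)) {u : U} {P : Finset (U × U)}
    (hP : P.Nonempty) (hG : Good K ρS β u P) (z : U)
    (hz : z ∉ P.image Prod.fst) :
    ∃ w : U, Good K ρS β u (insert (z, w) P) := by
  classical
  obtain ⟨hA, hB, hR⟩ := hG
  have hK0 : (0:ℝ) < K := by linarith
  have hβ0 : 0 ≤ β := by
    rw [hβ]; exact div_nonneg (by linarith) (by positivity)
  have hKKβ : K * K * β = K - 1 := by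
    rw [hβ]; field_simp
  by_cases hfar : ρS ≤ dist z u
  · -- far case: the identity pair (z, z) is added
    refine ⟨z, ?_, ?_, ?_⟩
    · intro p hp q hq
      rcases Finset.mem_insert.1 hp with rfl | hp' <;>
        rcases Finset.mem_insert.1 hq with rfl | hq'
      · simp only [dist_self, mul_zero, le_refl, and_self]
      · have h1 := hB q hq' z hfar
        constructor
        · rw [dist_comm, dist_comm (z,z).1 q.1]; exact h1.1
        · rw [dist_comm, dist_comm (z,z).2 q.2]; exact h1.2
      · exact hB p hp' z hfar
      · exact hA p hp' q hq'
    · intro p hp q hq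
      rcases Finset.mem_insert.1 hp with rfl | hp'
      · constructor <;> exact le_mul_of_one_le_left dist_nonneg hK.le
      · exact hB p hp' q hq
    · intro p hp
      rcases Finset.mem_insert.1 hp with rfl | hp'
      · constructor <;> exact le_trans (by simp [dist_self]) (mul_nonneg hβ0 (le_max_left _ _))
      · exact hR p hp'
  · -- near case
    push_neg at hfar
    set M := ρS - dist z u with hM_def
    have hM : 0 < M := by simp only [hM_def]; linarith
    have hzpos : ∀ p ∈ P, 0 < dist z p.1 := by
      intro p hp
      rcases eq_or_lt_of_le (dist_nonneg (x := z) (y := p.1)) with h | h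
      · exfalso
        apply hz
        have : p.1 = z := (eq_of_dist_eq_zero h.symm).symm
        exact Finset.mem_image.2 ⟨p, hp, this⟩
      · exact h
    -- budget bound for each existing pair, relative to z
    have hRz : ∀ p ∈ P, dist p.1 p.2 ≤ β * (M + dist z p.1) := by
      intro p hp
      refine le_trans (hR p hp).1 (mul_le_mul_of_nonneg_left (max_le ?_ ?_) hβ0)
      · have := dist_nonneg (x := z) (y := p.1); simp only [hM_def]; linarith
      · have := dist_triangle z p.1 u
        simp only [hM_def]; linarith
    set D := P.sup' hP (fun p => max 0 (max (dist z p.1 / K - dist z p.2)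
      (dist z p.2 - K * dist z p.1))) with hD_def
    have hDle : ∀ p ∈ P,
        max 0 (max (dist z p.1 / K - dist z p.2) (dist z p.2 - K * dist z p.1)) ≤ D := by
      intro p hp
      rw [hD_def]
      exact Finset.le_sup' (fun p => max 0 (max (dist z p.1 / K - dist z p.2)
        (dist z p.2 - K * dist z p.1))) hp
    have hD0 : 0 ≤ D := le_trans (le_max_left _ _) (hDle _ hP.choose_spec)
    have hD1 : ∀ p ∈ P, dist z p.1 / K - dist z p.2 ≤ D :=
      fun p hp => le_trans (le_trans (le_max_left _ _) (le_max_right 0 _)) (hDle p hp)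
    have hD2 : ∀ p ∈ P, dist z p.2 - K * dist z p.1 ≤ D :=
      fun p hp => le_trans (le_trans (le_max_right _ _) (le_max_right 0 _)) (hDle p hp)
    have hβK : β ≤ K - 1 := by
      have h7 : K - 1 - β = β * (K * K - 1) := by linear_combination (-1 : ℝ) * hKKβ
      nlinarith [mul_nonneg hβ0 (by nlinarith : (0:ℝ) ≤ K * K - 1)]
    have hco : 1 ≤ K * (1 - β) := by
      have h6 : K * (K - K * β - 1) = (K - 1)^2 := by linear_combination (-1 : ℝ) * hKKβ
      nlinarith [sq_nonneg (K - 1)]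
    have hDM : D ≤ β * M := by
      rw [hD_def]
      refine Finset.sup'_le hP _ (fun p hp => ?_)
      have h1 : dist z p.2 ≤ dist z p.1 + dist p.1 p.2 := dist_triangle _ _ _
      have h2 : dist z p.1 ≤ dist z p.2 + dist p.1 p.2 := by
        have := dist_triangle z p.2 p.1
        rw [dist_comm p.2 p.1] at this; linarith
      have h3 := hRz p hp
      have h4 := (hzpos p hp).le
      have h5 : (0:ℝ) ≤ dist z p.2 := dist_nonneg
      have hMβ : 0 ≤ β * M := mul_nonneg hβ0 hM.le
      refine max_le hMβ (max_le ?_ ?_)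
      · rw [sub_le_iff_le_add, div_le_iff₀ hK0]
        have key : (1 - β) * dist z p.1 ≤ β * M + dist z p.2 := by nlinarith
        calc dist z p.1 ≤ K * (1 - β) * dist z p.1 := le_mul_of_one_le_left h4 hco
          _ = K * ((1 - β) * dist z p.1) := by ring
          _ ≤ K * (β * M + dist z p.2) := mul_le_mul_of_nonneg_left key hK0.le
          _ = (β * M + dist z p.2) * K := by ring
      · have h8 : 0 ≤ (K - 1 - β) * dist z p.1 := mul_nonneg (by linarith) h4
        nlinarith
    -- the `H`-function (upper Katětov envelope of the hard windows)
    set H : U → ℝ := fun b => P.inf' hP (fun p => K * dist z p.1 + dist b p.2) with hH_def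
    have hHle : ∀ b : U, ∀ p ∈ P, H b ≤ K * dist z p.1 + dist b p.2 := by
      intro b p hp
      rw [hH_def]
      exact Finset.inf'_le _ hp
    have hHwit : ∀ b : U, ∃ p ∈ P, H b = K * dist z p.1 + dist b p.2 := by
      intro b
      rw [hH_def]
      exact Finset.exists_mem_eq_inf' hP _
    have hardi : ∀ p ∈ P, ∀ p' ∈ P, dist z p.1 / K ≤ K * dist z p'.1 + dist p.2 p'.2 := by
      intro p hp p' hp'
      rw [div_le_iff₀ hK0]
      have h1 : dist z p.1 ≤ dist z p'.1 + dist p.1 p'.1 := by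
        have := dist_triangle z p'.1 p.1
        rw [dist_comm p'.1 p.1] at this; linarith
      have h2 : dist p.1 p'.1 ≤ K * dist p.2 p'.2 := (hA p hp p' hp').2
      have h3 : (0:ℝ) ≤ dist z p'.1 := dist_nonneg
      have h4 : (0:ℝ) ≤ dist p.2 p'.2 := dist_nonneg
      nlinarith [mul_nonneg h3 (by nlinarith : (0:ℝ) ≤ K * K - 1),
        mul_nonneg h4 (by linarith : (0:ℝ) ≤ K - 1)]
    -- the distance function from the new image point to the old image points
    set r : U → ℝ := fun b => min (H b) (dist z b + D) with hr_def
    have hre : ∀ b, r b = min (H b) (dist z b + D) := fun b => rfl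
    have hrH : ∀ b, r b ≤ H b := fun b => min_le_left _ _
    have hrDb : ∀ b, r b ≤ dist z b + D := fun b => min_le_right _ _
    have hrub : ∀ p ∈ P, r p.2 ≤ K * dist z p.1 := by
      intro p hp
      refine le_trans (hrH p.2) (le_trans (hHle p.2 p hp) ?_)
      simp [dist_self]
    have hrlb : ∀ p ∈ P, dist z p.1 / K ≤ r p.2 := by
      intro p hp
      refine le_min ?_ ?_
      · rw [hH_def]
        exact Finset.le_inf' hP _ (fun p' hp' => hardi p hp p' hp')
      · linarith [hD1 p hp]
    have hrlb' : ∀ p ∈ P, dist z p.1 ≤ K * r p.2 := by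
      intro p hp
      have h := hrlb p hp
      rw [div_le_iff₀ hK0] at h
      linarith
    have hrpos : ∀ p ∈ P, 0 ≤ r p.2 := fun p hp =>
      le_trans (div_nonneg dist_nonneg hK0.le) (hrlb p hp)
    have hrdev : ∀ p ∈ P, |r p.2 - dist z p.2| ≤ D := by
      intro p hp
      rw [abs_le]
      refine ⟨?_, by linarith [hrDb p.2]⟩
      rw [neg_le, neg_sub]
      -- dist z p.2 - r p.2 ≤ D
      rcases min_cases (H p.2) (dist z p.2 + D) with ⟨heq, _⟩ | ⟨heq, _⟩
      · obtain ⟨p', hp', hwit⟩ := hHwit p.2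
        have h1 : dist z p.2 ≤ dist z p'.2 + dist p.2 p'.2 := by
          have := dist_triangle z p'.2 p.2
          rw [dist_comm p'.2 p.2] at this; linarith
        have h2 := hD2 p' hp'
        have h3 : r p.2 = K * dist z p'.1 + dist p.2 p'.2 := by rw [hre, heq, hwit]
        linarith
      · have h3 : r p.2 = dist z p.2 + D := by rw [hre, heq]
        linarith
    have hrLip : ∀ v v' : U, r v ≤ r v' + dist v v' := by
      intro v v'
      rcases min_cases (H v') (dist z v' + D) with ⟨heq, _⟩ | ⟨heq, _⟩
      · have hH' : H v ≤ H v' + dist v v' := by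
          obtain ⟨p', hp', hwit⟩ := hHwit v'
          refine le_trans (hHle v p' hp') ?_
          have : dist v p'.2 ≤ dist v' p'.2 + dist v v' := by
            have := dist_triangle v v' p'.2
            linarith
          rw [hwit]; linarith
        rw [hre v', heq]
        exact le_trans (hrH v) (by linarith)
      · rw [hre v', heq]
        refine le_trans (hrDb v) ?_
        have : dist z v ≤ dist z v' + dist v v' := by
          have := dist_triangle z v' v
          rw [dist_comm v' v] at this; linarith
        linarith
    have hrsum : ∀ p ∈ P, ∀ p' ∈ P, dist p.2 p'.2 ≤ r p.2 + r p'.2 := by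
      intro p hp p' hp'
      rcases min_cases (H p.2) (dist z p.2 + D) with ⟨heq, _⟩ | ⟨heq, _⟩ <;>
        rcases min_cases (H p'.2) (dist z p'.2 + D) with ⟨heq', _⟩ | ⟨heq', _⟩
      · obtain ⟨q, hq, hwit⟩ := hHwit p.2
        obtain ⟨q', hq', hwit'⟩ := hHwit p'.2
        have h1 : dist q.2 q'.2 ≤ K * dist q.1 q'.1 := (hA q hq q' hq').1
        have h2 : dist q.1 q'.1 ≤ dist z q.1 + dist z q'.1 := by
          have := dist_triangle q.1 z q'.1
          rw [dist_comm q.1 z] at this; linarith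
        have h3 : dist p.2 p'.2 ≤ dist p.2 q.2 + dist q.2 q'.2 + dist q'.2 p'.2 := by
          have t1 := dist_triangle p.2 q.2 p'.2
          have t2 := dist_triangle q.2 q'.2 p'.2
          linarith
        have e1 : r p.2 = K * dist z q.1 + dist p.2 q.2 := by rw [hre, heq, hwit]
        have e2 : r p'.2 = K * dist z q'.1 + dist p'.2 q'.2 := by rw [hre, heq', hwit']
        have h4 : (0:ℝ) ≤ K - 1 := by linarith
        have h5 : (0:ℝ) ≤ dist z q.1 := dist_nonneg
        have h6 : (0:ℝ) ≤ dist z q'.1 := dist_nonneg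
        rw [e1, e2, dist_comm q'.2 p'.2] at *
        nlinarith
      · obtain ⟨q, hq, hwit⟩ := hHwit p.2
        have e1 : r p.2 = K * dist z q.1 + dist p.2 q.2 := by rw [hre, heq, hwit]
        have e2 : r p'.2 = dist z p'.2 + D := by rw [hre, heq']
        have h1 : dist z q.2 ≤ K * dist z q.1 + D := by linarith [hD2 q hq]
        have h2 : dist p.2 p'.2 ≤ dist p.2 q.2 + dist q.2 z + dist z p'.2 := by
          have t1 := dist_triangle p.2 q.2 p'.2
          have t2 := dist_triangle q.2 z p'.2
          have t3 : dist z p'.2 = dist p'.2 z := dist_comm _ _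
          linarith [dist_triangle q.2 z p'.2]
        rw [dist_comm q.2 z] at h2
        rw [e1, e2]
        linarith
      · obtain ⟨q, hq, hwit⟩ := hHwit p'.2
        have e1 : r p'.2 = K * dist z q.1 + dist p'.2 q.2 := by rw [hre, heq', hwit]
        have e2 : r p.2 = dist z p.2 + D := by rw [hre, heq]
        have h1 : dist z q.2 ≤ K * dist z q.1 + D := by linarith [hD2 q hq]
        have h2 : dist p.2 p'.2 ≤ dist p.2 z + dist z q.2 + dist q.2 p'.2 := by
          have t1 := dist_triangle p.2 z p'.2
          have t2 := dist_triangle z q.2 p'.2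
          linarith
        rw [dist_comm p.2 z] at h2
        rw [dist_comm p'.2 q.2] at e1
        rw [e1, e2]
        linarith
      · have h2 : dist p.2 p'.2 ≤ dist z p.2 + dist z p'.2 := by
          have := dist_triangle p.2 z p'.2
          rw [dist_comm p.2 z] at this; linarith
        rw [hre, heq, hre, heq']
        linarith
    -- the prescribed distance from the new image point to `z`
    set t : ℝ := P.sup' hP (fun p => |r p.2 - dist z p.2|) with ht_def
    have ht_ge : ∀ p ∈ P, |r p.2 - dist z p.2| ≤ t := by
      intro p hp
      rw [ht_def]
      exact Finset.le_sup' (fun p => |r p.2 - dist z p.2|) hp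
    have ht0 : 0 ≤ t := le_trans (abs_nonneg _) (ht_ge _ hP.choose_spec)
    have htD : t ≤ D := by
      rw [ht_def]
      exact Finset.sup'_le hP _ (fun p hp => hrdev p hp)
    have ht_lip : ∀ p ∈ P, |t - r p.2| ≤ dist z p.2 := by
      intro p hp
      rw [abs_le]
      constructor
      · have := ht_ge p hp
        rw [abs_le] at this
        linarith [this.1]
      · rw [sub_le_iff_le_add]
        obtain ⟨q, hq, hwit⟩ := Finset.exists_mem_eq_sup' hP (fun p => |r p.2 - dist z p.2|)
        rw [ht_def, hwit]
        rcases abs_cases (r q.2 - dist z q.2) with ⟨he, _⟩ | ⟨he, _⟩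
        · rw [he]
          have h1 : r q.2 ≤ r p.2 + dist q.2 p.2 := hrLip q.2 p.2
          have h2 : dist q.2 p.2 ≤ dist z q.2 + dist z p.2 := by
            have := dist_triangle q.2 z p.2
            rw [dist_comm q.2 z] at this; linarith
          linarith
        · rw [he]
          have h1 : dist q.2 p.2 ≤ r q.2 + r p.2 := hrsum q hq p hp
          have h2 : dist z q.2 ≤ dist z p.2 + dist q.2 p.2 := by
            have := dist_triangle z p.2 q.2
            rw [dist_comm p.2 q.2] at this; linarith
          linarith
    have ht_sum : ∀ p ∈ P, dist z p.2 ≤ t + r p.2 := by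
      intro p hp
      have := ht_ge p hp
      rw [abs_le] at this
      linarith [this.1]
    -- assemble the Katětov function on the anchor set
    set T : Finset U := insert z (P.image Prod.snd) with hT_def
    set κ : U → ℝ := fun v => if v ∈ P.image Prod.snd then r v else t with hκ_def
    have hκ_img : ∀ p ∈ P, κ p.2 = r p.2 := by
      intro p hp
      simp only [hκ_def]
      rw [if_pos (Finset.mem_image.2 ⟨p, hp, rfl⟩)]
    have hκmem : ∀ q ∈ T, (∃ p ∈ P, p.2 = q ∧ κ q = r q) ∨ (q = z ∧ κ q = t) := by
      intro q hq
      by_cases him : q ∈ P.image Prod.snd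
      · obtain ⟨p, hp, hpq⟩ := Finset.mem_image.1 him
        exact Or.inl ⟨p, hp, hpq, by simp only [hκ_def]; rw [if_pos him]⟩
      · rcases Finset.mem_insert.1 hq with rfl | him'
        · exact Or.inr ⟨rfl, by simp only [hκ_def]; rw [if_neg him]⟩
        · exact absurd him' him
    have hκ0 : ∀ q ∈ T, 0 ≤ κ q := by
      intro q hq
      rcases hκmem q hq with ⟨p, hp, rfl, he⟩ | ⟨rfl, he⟩
      · rw [he]; exact hrpos p hp
      · rw [he]; exact ht0
    have hκlip : ∀ q ∈ T, ∀ q' ∈ T, |κ q - κ q'| ≤ dist q q' := by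
      intro q hq q' hq'
      rcases hκmem q hq with ⟨p, hp, rfl, he⟩ | ⟨rfl, he⟩ <;>
        rcases hκmem q' hq' with ⟨p', hp', rfl, he'⟩ | ⟨rfl, he'⟩
      · rw [he, he', abs_le]
        have h1 := hrLip p.2 p'.2
        have h2 := hrLip p'.2 p.2
        rw [dist_comm p'.2 p.2] at h2
        exact ⟨by linarith, by linarith⟩
      · rw [he, he']
        have := ht_lip p hp
        rw [abs_sub_comm, dist_comm]
        exact this
      · rw [he, he']
        exact ht_lip p' hp'
      · rw [he]
        simp [dist_self]
    have hκsum : ∀ q ∈ T, ∀ q' ∈ T, dist q q' ≤ κ q + κ q' := by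
      intro q hq q' hq'
      rcases hκmem q hq with ⟨p, hp, rfl, he⟩ | ⟨rfl, he⟩ <;>
        rcases hκmem q' hq' with ⟨p', hp', rfl, he'⟩ | ⟨rfl, he'⟩
      · rw [he, he']
        exact hrsum p hp p' hp'
      · rw [he, he', dist_comm]
        linarith [ht_sum p hp]
      · rw [he, he']
        linarith [ht_sum p' hp']
      · rw [he]
        simp only [dist_self]
        linarith
    obtain ⟨w, hw⟩ := hU.realize T κ hκ0 hκlip hκsum ⟨z, Finset.mem_insert_self _ _⟩
    have hwb : ∀ p ∈ P, dist w p.2 = r p.2 := by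
      intro p hp
      rw [← hκ_img p hp]
      exact hw p.2 (Finset.mem_insert_of_mem (Finset.mem_image.2 ⟨p, hp, rfl⟩))
    have hwz : dist w z ≤ D := by
      have h1 := hw z (Finset.mem_insert_self _ _)
      rcases hκmem z (Finset.mem_insert_self _ _) with ⟨p, hp, hpz, he⟩ | ⟨_, he⟩
      · rw [h1, he]
        have := hrdev p hp
        rw [hpz] at this
        simp only [dist_self] at this
        rw [abs_le] at this
        linarith [this.2]
      · rw [h1, he]; exact htD
    -- verify that the extended set is still Good
    refine ⟨w, ?_, ?_, ?_⟩
    · intro p hp q hq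
      rcases Finset.mem_insert.1 hp with rfl | hp' <;>
        rcases Finset.mem_insert.1 hq with rfl | hq'
      · simp only [dist_self, mul_zero, le_refl, and_self]
      · exact ⟨by rw [hwb q hq']; exact hrub q hq', by rw [hwb q hq']; exact hrlb' q hq'⟩
      · constructor
        · rw [dist_comm p.2 w, dist_comm p.1 z, hwb p hp']
          exact hrub p hp'
        · rw [dist_comm p.2 w, dist_comm p.1 z, hwb p hp']
          exact hrlb' p hp'
      · exact hA p hp' q hq'
    · intro p hp q hq
      rcases Finset.mem_insert.1 hp with rfl | hp'
      · have hMq : M ≤ dist z q := by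
          have := dist_triangle q z u
          rw [dist_comm q z] at this
          simp only [hM_def]
          linarith
        have hd : dist w z ≤ β * dist z q :=
          le_trans hwz (le_trans hDM (mul_le_mul_of_nonneg_left hMq hβ0))
        have h5 : (0:ℝ) ≤ dist z q := dist_nonneg
        constructor
        · have h1 : dist w q ≤ dist w z + dist z q := dist_triangle _ _ _
          nlinarith
        · have h1 : dist z q ≤ dist w z + dist w q := by
            have := dist_triangle z w q
            rw [dist_comm z w] at this; linarith
          have h2 : (0:ℝ) ≤ dist w q := dist_nonneg
          nlinarith
      · exact hB p hp' q hq
    · intro p hp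
      rcases Finset.mem_insert.1 hp with rfl | hp'
      · have hzw : dist z w = dist w z := dist_comm _ _
        constructor
        · rw [hzw]
          refine le_trans hwz (le_trans hDM ?_)
          exact mul_le_mul_of_nonneg_left (le_max_right _ _) hβ0
        · -- the w-side budget
          rcases eq_or_lt_of_le hD0 with hD0' | hD0'
          · rw [hzw]
            refine le_trans hwz (le_trans hD0'.symm.le ?_)
            exact mul_nonneg hβ0 (le_max_left _ _)
          · obtain ⟨q, hq, hwit⟩ := Finset.exists_mem_eq_sup' hP
              (fun p => max 0 (max (dist z p.1 / K - dist z p.2) (dist z p.2 - K * dist z p.1)))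
            rw [← hD_def] at hwit
            -- K * D ≤ K * dab - (K-1) * dza for the witness pair
            have hKD : K * D ≤ K * dist q.1 q.2 - (K - 1) * dist z q.1 := by
              have h1 : dist z q.2 ≤ dist z q.1 + dist q.1 q.2 := dist_triangle _ _ _
              have h2 : dist z q.1 ≤ dist z q.2 + dist q.1 q.2 := by
                have := dist_triangle z q.2 q.1
                rw [dist_comm q.2 q.1] at this; linarith
              have h4 := (hzpos q hq).le
              have h5 : (0:ℝ) ≤ dist z q.2 := dist_nonneg
              have hcase : D = max (dist z q.1 / K - dist z q.2) (dist z q.2 - K * dist z q.1) := by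
                rcases max_cases (0:ℝ) (max (dist z q.1 / K - dist z q.2)
                    (dist z q.2 - K * dist z q.1)) with ⟨he, hle⟩ | ⟨he, hle⟩
                · rw [hwit, he] at hD0'
                  exact absurd hD0' (lt_irrefl _)
                · rw [hwit, he]
              rcases max_cases (dist z q.1 / K - dist z q.2)
                  (dist z q.2 - K * dist z q.1) with ⟨he, _⟩ | ⟨he, _⟩
              · rw [hcase, he]
                have : dist z q.1 / K * K = dist z q.1 := div_mul_cancel₀ _ (ne_of_gt hK0)
                nlinarith
              · rw [hcase, he]
                nlinarith [sq_nonneg (K-1), mul_nonneg (mul_nonneg h4 (by linarith : (0:ℝ) ≤ K - 1)) (by linarith : (0:ℝ) ≤ K - 1)]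
            have hab0 : 0 < dist q.1 q.2 := by
              by_contra hc
              push_neg at hc
              have : dist q.1 q.2 = 0 := le_antisymm hc dist_nonneg
              nlinarith [(hzpos q hq), mul_pos hK0 hD0']
            have hqR := (hR q hq).2
            have hmax : 0 < max 0 (ρS - dist q.2 u) := by
              rcases le_or_gt (max 0 (ρS - dist q.2 u)) 0 with hc | hc
              · exfalso
                have : dist q.1 q.2 ≤ 0 := le_trans hqR (by nlinarith)
                linarith
              · exact hc
            have hmax' : max 0 (ρS - dist q.2 u) = ρS - dist q.2 u := by
              rcases max_cases (0:ℝ) (ρS - dist q.2 u) with ⟨he, hle⟩ | ⟨he, _⟩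
              · rw [he] at hmax
                exact absurd hmax (lt_irrefl _)
              · exact he
            have hqR' : dist q.1 q.2 ≤ β * (ρS - dist q.2 u) := by
              rw [← hmax']; exact hqR
            have hwu : dist w u ≤ K * dist z q.1 + dist q.2 u := by
              have h1 : dist w u ≤ dist w q.2 + dist q.2 u := dist_triangle _ _ _
              rw [hwb q hq] at h1
              linarith [hrub q hq]
            -- conclude
            have hfin : K * K * dist z w ≤ (K - 1) * (ρS - dist w u) := by
              have h1 : K * dist z w ≤ K * D := by
                rw [hzw]
                exact mul_le_mul_of_nonneg_left hwz hK0.le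
              have h2 : K * (K * D) ≤ K * (K * dist q.1 q.2 - (K - 1) * dist z q.1) :=
                mul_le_mul_of_nonneg_left hKD hK0.le
              have h3 : K * K * dist q.1 q.2 ≤ (K - 1) * (ρS - dist q.2 u) := by
                calc K * K * dist q.1 q.2 ≤ K * K * (β * (ρS - dist q.2 u)) := by
                      refine mul_le_mul_of_nonneg_left hqR' (by positivity)
                  _ = (K - 1) * (ρS - dist q.2 u) := by rw [← hKKβ]; ring
              have h4 : (0:ℝ) ≤ K - 1 := by linarith
              have h5 := (hzpos q hq).le
              nlinarith [mul_le_mul_of_nonneg_left h1 hK0.le]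
            have hfin2 : dist z w ≤ β * (ρS - dist w u) := by
              have hKK : (0:ℝ) < K * K := by positivity
              rw [← mul_le_mul_iff_right₀ hKK]
              calc K * K * dist z w ≤ (K - 1) * (ρS - dist w u) := hfin
                _ = K * K * (β * (ρS - dist w u)) := by rw [← hKKβ]; ring
            refine le_trans hfin2 (mul_le_mul_of_nonneg_left (le_max_right _ _) hβ0)
      · exact hR p hp'


lemma step_all (hU : IsUrysohn U) {K ρS β : ℝ} (hK : 1 < K) (hρ : 0 < ρS)
    (hβ : β = (K - 1) / (K * K)) {u : U} {P : Finset (U × U)}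
    (hP : P.Nonempty) (hG : Good K ρS β u P) (z : U) :
    ∃ P' : Finset (U × U), P ⊆ P' ∧ P'.Nonempty ∧ Good K ρS β u P' ∧
      z ∈ P'.image Prod.fst ∧ z ∈ P'.image Prod.snd := by
  classical
  obtain ⟨P₁, hsub₁, hne₁, hG₁, hdom₁⟩ : ∃ P₁, P ⊆ P₁ ∧ P₁.Nonempty ∧
      Good K ρS β u P₁ ∧ z ∈ P₁.image Prod.fst := by
    by_cases hz : z ∈ P.image Prod.fst
    · exact ⟨P, Finset.Subset.refl _, hP, hG, hz⟩
    · obtain ⟨w, hGw⟩ := step_forward hU hK hρ hβ hP hG z hz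
      exact ⟨insert (z, w) P, Finset.subset_insert _ _, ⟨_, Finset.mem_insert_self _ _⟩, hGw,
        Finset.mem_image.2 ⟨(z, w), Finset.mem_insert_self _ _, rfl⟩⟩
  by_cases hz2 : z ∈ P₁.image Prod.snd
  · exact ⟨P₁, hsub₁, hne₁, hG₁, hdom₁, hz2⟩
  · have hz2' : z ∉ (P₁.image Prod.swap).image Prod.fst := by
      intro hc
      apply hz2
      rw [Finset.image_image] at hc
      obtain ⟨p, hp, hpz⟩ := Finset.mem_image.1 hc
      exact Finset.mem_image.2 ⟨p, hp, hpz⟩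
    obtain ⟨w, hGw⟩ := step_forward hU hK hρ hβ (hne₁.image _) hG₁.swap z hz2'
    have hswap : (insert (z, w) (P₁.image Prod.swap)).image Prod.swap
        = insert (w, z) P₁ := by
      rw [Finset.image_insert, Finset.image_image]
      have h1 : (Prod.swap ∘ Prod.swap : U × U → U × U) = id := by
        funext p; simp
      rw [h1, Finset.image_id]
      rfl
    refine ⟨insert (w, z) P₁, ?_, ⟨_, Finset.mem_insert_self _ _⟩, ?_, ?_, ?_⟩
    · exact hsub₁.trans (Finset.subset_insert _ _)
    · rw [← hswap]; exact hGw.swap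
    · exact Finset.image_subset_image (Finset.subset_insert _ _) hdom₁
    · exact Finset.mem_image.2 ⟨(w, z), Finset.mem_insert_self _ _, rfl⟩

/-- The main construction: a bilipschitz bijection of `U` with constant `K`,
displacement controlled by `β (ρS - d(·,u))₊`, extending the finite map `P₀`. -/
lemma exists_bilip (hU : IsUrysohn U) {K ρS β : ℝ} (hK : 1 < K) (hρ : 0 < ρS)
    (hβ : β = (K - 1) / (K * K)) {u : U} {P₀ : Finset (U × U)}
    (hP₀ : P₀.Nonempty) (hG₀ : Good K ρS β u P₀) :
    ∃ g ginv : U → U,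
      Function.LeftInverse ginv g ∧ Function.RightInverse ginv g ∧
      (∀ x y : U, dist (g x) (g y) ≤ K * dist x y) ∧
      (∀ x y : U, dist x y ≤ K * dist (g x) (g y)) ∧
      (∀ x : U, dist x (g x) ≤ β * max 0 (ρS - dist x u)) ∧
      (∀ p ∈ P₀, g p.1 = p.2) := by
  classical
  have hK0 : (0:ℝ) < K := by linarith
  haveI : CompleteSpace U := hU.1
  haveI : TopologicalSpace.SeparableSpace U := hU.2.1
  haveI : Nonempty U := ⟨u⟩
  obtain ⟨e, he⟩ := TopologicalSpace.exists_dense_seq U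
  -- the increasing chain of good finite partial maps
  let Next : {P : Finset (U × U) // P.Nonempty ∧ Good K ρS β u P} → U →
      {P : Finset (U × U) // P.Nonempty ∧ Good K ρS β u P} := fun s z =>
    ⟨(step_all hU hK hρ hβ s.2.1 s.2.2 z).choose,
      (step_all hU hK hρ hβ s.2.1 s.2.2 z).choose_spec.2.1,
      (step_all hU hK hρ hβ s.2.1 s.2.2 z).choose_spec.2.2.1⟩
  let Q : ℕ → {P : Finset (U × U) // P.Nonempty ∧ Good K ρS β u P} := fun n =>
    Nat.rec ⟨P₀, hP₀, hG₀⟩ (fun n s => Next s (e n)) n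
  have hQsub : ∀ n, (Q n).1 ⊆ (Q (n + 1)).1 := fun n =>
    (step_all hU hK hρ hβ (Q n).2.1 (Q n).2.2 (e n)).choose_spec.1
  have hQdom : ∀ n, e n ∈ ((Q (n + 1)).1).image Prod.fst := fun n =>
    (step_all hU hK hρ hβ (Q n).2.1 (Q n).2.2 (e n)).choose_spec.2.2.2.1
  have hQran : ∀ n, e n ∈ ((Q (n + 1)).1).image Prod.snd := fun n =>
    (step_all hU hK hρ hβ (Q n).2.1 (Q n).2.2 (e n)).choose_spec.2.2.2.2
  have hmono : ∀ {m n : ℕ}, m ≤ n → (Q m).1 ⊆ (Q n).1 := by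
    intro m n h
    induction h with
    | refl => exact Finset.Subset.refl _
    | step h ih => exact ih.trans (hQsub _)
  set Pinf : Set (U × U) := ⋃ n, ((Q n).1 : Set (U × U)) with hPinf_def
  have hmem2 : ∀ {pr qr : U × U}, pr ∈ Pinf → qr ∈ Pinf →
      ∃ n, pr ∈ (Q n).1 ∧ qr ∈ (Q n).1 := by
    intro pr qr hp hq
    obtain ⟨sn, ⟨n, rfl⟩, hn⟩ := hp
    obtain ⟨sm, ⟨m, rfl⟩, hm⟩ := hq
    exact ⟨max n m, hmono (le_max_left n m) hn, hmono (le_max_right n m) hm⟩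
  have hpairA : ∀ {pr qr : U × U}, pr ∈ Pinf → qr ∈ Pinf →
      dist pr.2 qr.2 ≤ K * dist pr.1 qr.1 ∧ dist pr.1 qr.1 ≤ K * dist pr.2 qr.2 := by
    intro pr qr hp hq
    obtain ⟨n, hn, hm⟩ := hmem2 hp hq
    exact (Q n).2.2.1 pr hn qr hm
  have hpairR : ∀ {pr : U × U}, pr ∈ Pinf →
      dist pr.1 pr.2 ≤ β * max 0 (ρS - dist pr.1 u) := by
    intro pr hp
    obtain ⟨sn, ⟨n, rfl⟩, hn⟩ := hp
    exact ((Q n).2.2.2.2 pr hn).1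
  have hP₀inf : ∀ p ∈ P₀, p ∈ Pinf := by
    intro p hp
    exact Set.mem_iUnion.2 ⟨0, hp⟩
  have hinj1 : ∀ {a b b' : U}, (a, b) ∈ Pinf → (a, b') ∈ Pinf → b = b' := by
    intro a b b' h1 h2
    have := (hpairA h1 h2).1
    simp only [dist_self, mul_zero] at this
    exact eq_of_dist_eq_zero (le_antisymm this dist_nonneg)
  have hinj2 : ∀ {a a' b : U}, (a, b) ∈ Pinf → (a', b) ∈ Pinf → a = a' := by
    intro a a' b h1 h2
    have := (hpairA h1 h2).2
    simp only [dist_self, mul_zero] at this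
    exact eq_of_dist_eq_zero (le_antisymm this dist_nonneg)
  set Dom : Set U := Prod.fst '' Pinf with hDom_def
  set Ran : Set U := Prod.snd '' Pinf with hRan_def
  have hDomDense : Dense Dom := by
    refine Dense.mono ?_ he
    rintro x ⟨n, rfl⟩
    obtain ⟨p, hp, hpe⟩ := Finset.mem_image.1 (hQdom n)
    exact ⟨p, Set.mem_iUnion.2 ⟨n + 1, hp⟩, hpe⟩
  have hRanDense : Dense Ran := by
    refine Dense.mono ?_ he
    rintro x ⟨n, rfl⟩
    obtain ⟨p, hp, hpe⟩ := Finset.mem_image.1 (hQran n)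
    exact ⟨p, Set.mem_iUnion.2 ⟨n + 1, hp⟩, hpe⟩
  set f₀ : U → U := fun x => if h : ∃ b, (x, b) ∈ Pinf then h.choose else x with hf₀_def
  set f₁ : U → U := fun y => if h : ∃ a, (a, y) ∈ Pinf then h.choose else y with hf₁_def
  have hf₀ : ∀ {a b : U}, (a, b) ∈ Pinf → f₀ a = b := by
    intro a b hab
    have h : ∃ b', (a, b') ∈ Pinf := ⟨b, hab⟩
    simp only [hf₀_def, dif_pos h]
    exact hinj1 h.choose_spec hab
  have hf₁ : ∀ {a b : U}, (a, b) ∈ Pinf → f₁ b = a := by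
    intro a b hab
    have h : ∃ a', (a', b) ∈ Pinf := ⟨a, hab⟩
    simp only [hf₁_def, dif_pos h]
    exact hinj2 h.choose_spec hab
  have hmemf₀ : ∀ x ∈ Dom, (x, f₀ x) ∈ Pinf := by
    rintro x ⟨p, hp, rfl⟩
    have : (p.1, p.2) ∈ Pinf := hp
    rw [hf₀ this]
    exact this
  have hmemf₁ : ∀ y ∈ Ran, (f₁ y, y) ∈ Pinf := by
    rintro y ⟨p, hp, rfl⟩
    have : (p.1, p.2) ∈ Pinf := hp
    rw [hf₁ this]
    exact this
  -- uniformly continuous partial maps on the dense sets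
  let φ : Dom → U := fun x => f₀ x.1
  let ψ : Ran → U := fun y => f₁ y.1
  have hφlip : ∀ x y : Dom, dist (φ x) (φ y) ≤ K * dist x y := by
    intro x y
    have h1 := hmemf₀ x.1 x.2
    have h2 := hmemf₀ y.1 y.2
    have := (hpairA h1 h2).1
    rw [Subtype.dist_eq]
    exact this
  have hψlip : ∀ x y : Ran, dist (ψ x) (ψ y) ≤ K * dist x y := by
    intro x y
    have h1 := hmemf₁ x.1 x.2
    have h2 := hmemf₁ y.1 y.2
    have := (hpairA h1 h2).2
    rw [Subtype.dist_eq]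
    exact this
  have hφuc : UniformContinuous φ :=
    (LipschitzWith.of_dist_le_mul (K := Real.toNNReal K) (by
      intro x y
      rw [Real.coe_toNNReal K hK0.le]
      exact hφlip x y)).uniformContinuous
  have hψuc : UniformContinuous ψ :=
    (LipschitzWith.of_dist_le_mul (K := Real.toNNReal K) (by
      intro x y
      rw [Real.coe_toNNReal K hK0.le]
      exact hψlip x y)).uniformContinuous
  have hui : IsUniformInducing (Subtype.val : Dom → U) :=
    isUniformEmbedding_subtype_val.isUniformInducing
  have hui' : IsUniformInducing (Subtype.val : Ran → U) :=
    isUniformEmbedding_subtype_val.isUniformInducing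
  have hdr : DenseRange (Subtype.val : Dom → U) := hDomDense.denseRange_val
  have hdr' : DenseRange (Subtype.val : Ran → U) := hRanDense.denseRange_val
  set g : U → U := (hui.isDenseInducing hdr).extend φ with hg_def
  set gi : U → U := (hui'.isDenseInducing hdr').extend ψ with hgi_def
  have hgc : Continuous g :=
    (uniformContinuous_uniformly_extend hui hdr hφuc).continuous
  have hgic : Continuous gi :=
    (uniformContinuous_uniformly_extend hui' hdr' hψuc).continuous
  have hgeq : ∀ x : Dom, g x.1 = φ x := fun x =>
    (hui.isDenseInducing hdr).extend_eq hφuc.continuous x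
  have hgieq : ∀ y : Ran, gi y.1 = ψ y := fun y =>
    (hui'.isDenseInducing hdr').extend_eq hψuc.continuous y
  have hgPinf : ∀ {a b : U}, (a, b) ∈ Pinf → g a = b := by
    intro a b hab
    have ha : a ∈ Dom := ⟨(a, b), hab, rfl⟩
    have := hgeq ⟨a, ha⟩
    simp only [φ] at this
    rw [this, hf₀ hab]
  have hgiPinf : ∀ {a b : U}, (a, b) ∈ Pinf → gi b = a := by
    intro a b hab
    have hb : b ∈ Ran := ⟨(a, b), hab, rfl⟩
    have := hgieq ⟨b, hb⟩
    simp only [ψ] at this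
    rw [this, hf₁ hab]
  -- closure arguments
  have hgK : ∀ x y : U, dist (g x) (g y) ≤ K * dist x y := by
    have hclosed : IsClosed {q : U × U | dist (g q.1) (g q.2) ≤ K * dist q.1 q.2} :=
      isClosed_le ((hgc.comp continuous_fst).dist (hgc.comp continuous_snd))
        (continuous_const.mul (continuous_fst.dist continuous_snd))
    have hsub : Dom ×ˢ Dom ⊆ {q : U × U | dist (g q.1) (g q.2) ≤ K * dist q.1 q.2} := by
      rintro ⟨x, y⟩ ⟨hx, hy⟩
      simp only [Set.mem_setOf_eq]
      rw [hgPinf (hmemf₀ x hx), hgPinf (hmemf₀ y hy)]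
      exact (hpairA (hmemf₀ x hx) (hmemf₀ y hy)).1
    have hdense : closure (Dom ×ˢ Dom) = Set.univ := (hDomDense.prod hDomDense).closure_eq
    intro x y
    have : (x, y) ∈ closure (Dom ×ˢ Dom) := by rw [hdense]; trivial
    exact closure_minimal hsub hclosed this
  have hgK2 : ∀ x y : U, dist x y ≤ K * dist (g x) (g y) := by
    have hclosed : IsClosed {q : U × U | dist q.1 q.2 ≤ K * dist (g q.1) (g q.2)} :=
      isClosed_le (continuous_fst.dist continuous_snd)
        (continuous_const.mul ((hgc.comp continuous_fst).dist (hgc.comp continuous_snd)))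
    have hsub : Dom ×ˢ Dom ⊆ {q : U × U | dist q.1 q.2 ≤ K * dist (g q.1) (g q.2)} := by
      rintro ⟨x, y⟩ ⟨hx, hy⟩
      simp only [Set.mem_setOf_eq]
      rw [hgPinf (hmemf₀ x hx), hgPinf (hmemf₀ y hy)]
      exact (hpairA (hmemf₀ x hx) (hmemf₀ y hy)).2
    have hdense : closure (Dom ×ˢ Dom) = Set.univ := (hDomDense.prod hDomDense).closure_eq
    intro x y
    have : (x, y) ∈ closure (Dom ×ˢ Dom) := by rw [hdense]; trivial
    exact closure_minimal hsub hclosed this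
  have hgdisp : ∀ x : U, dist x (g x) ≤ β * max 0 (ρS - dist x u) := by
    have hclosed : IsClosed {x : U | dist x (g x) ≤ β * max 0 (ρS - dist x u)} :=
      isClosed_le (continuous_id.dist hgc)
        (continuous_const.mul (continuous_const.max
          (continuous_const.sub (continuous_id.dist continuous_const))))
    have hsub : Dom ⊆ {x : U | dist x (g x) ≤ β * max 0 (ρS - dist x u)} := by
      intro x hx
      simp only [Set.mem_setOf_eq]
      rw [hgPinf (hmemf₀ x hx)]
      exact hpairR (hmemf₀ x hx)
    intro x
    have : x ∈ closure Dom := by rw [hDomDense.closure_eq]; trivial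
    exact closure_minimal hsub hclosed this
  have hleft : ∀ x : U, gi (g x) = x := by
    have hclosed : IsClosed {x : U | gi (g x) = x} :=
      isClosed_eq (hgic.comp hgc) continuous_id
    have hsub : Dom ⊆ {x : U | gi (g x) = x} := by
      intro x hx
      simp only [Set.mem_setOf_eq]
      rw [hgPinf (hmemf₀ x hx), hgiPinf (hmemf₀ x hx)]
    intro x
    have : x ∈ closure Dom := by rw [hDomDense.closure_eq]; trivial
    exact closure_minimal hsub hclosed this
  have hright : ∀ y : U, g (gi y) = y := by
    have hclosed : IsClosed {y : U | g (gi y) = y} :=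
      isClosed_eq (hgc.comp hgic) continuous_id
    have hsub : Ran ⊆ {y : U | g (gi y) = y} := by
      intro y hy
      simp only [Set.mem_setOf_eq]
      rw [hgiPinf (hmemf₁ y hy), hgPinf (hmemf₁ y hy)]
    intro y
    have : y ∈ closure Ran := by rw [hRanDense.closure_eq]; trivial
    exact closure_minimal hsub hclosed this
  exact ⟨g, gi, hleft, hright, hgK, hgK2, hgdisp, fun p hp => hgPinf (hP₀inf p hp)⟩

end Step
set_option maxHeartbeats 1000000 in
/-- Affine-likeness of LIP^id(X) for a nonempty open subset X of the Urysohn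
space U: for every u ∈ X and every basic neighborhood {g : d̂(id, g) < ε} of
the identity, there is a neighborhood V of u inside X such that any pair of
equidistant pairs of points of V can be matched by an element of the
neighborhood which is the identity outside X. -/
theorem lip_id_affine_like (U : Type) [MetricSpace U] (hU : IsUrysohn U) (x₀ : U)
    (X : Set U) (hX : IsOpen X) (hXne : X.Nonempty) :
    ∀ u ∈ X, ∀ ε : ℝ, 0 < ε →
      ∃ V : Set U, IsOpen V ∧ u ∈ V ∧ V ⊆ X ∧
        ∀ x₁ ∈ V, ∀ y₁ ∈ V, ∀ x₂ ∈ V, ∀ y₂ ∈ V,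
          dist x₁ y₁ = dist x₂ y₂ →
            ∃ g : Bilip U,
              (∀ z ∉ X, g.toFun z = z) ∧
              Bilip.dHat x₀ Bilip.one g < ε ∧
              g.toFun x₁ = x₂ ∧ g.toFun y₁ = y₂ := by
  classical
  intro u hu ε hε
  set K := Real.exp (min ε 1 / 2) with hK_def
  have hmin : 0 < min ε 1 := lt_min hε one_pos
  have hK : 1 < K := by
    rw [hK_def]
    have : (0:ℝ) < min ε 1 / 2 := by linarith
    calc (1:ℝ) = Real.exp 0 := Real.exp_zero.symm
      _ < Real.exp (min ε 1 / 2) := Real.exp_lt_exp.2 this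
  have hK0 : (0:ℝ) < K := by linarith
  have hK3 : K < 3 := by
    rw [hK_def]
    have h1 : min ε 1 / 2 ≤ 1 := by
      have := min_le_right ε 1; linarith
    calc Real.exp (min ε 1 / 2) ≤ Real.exp 1 := Real.exp_le_exp.2 h1
      _ < 3 := by
        have := Real.exp_one_lt_d9
        linarith
  obtain ⟨ρ₀, hρ₀pos, hball⟩ := Metric.isOpen_iff.1 hX u hu
  set ρS := min (ρ₀ / 2) (ε / 16) with hρS_def
  have hρS : 0 < ρS := lt_min (by linarith) (by linarith)
  have hρSρ₀ : ρS ≤ ρ₀ / 2 := min_le_left _ _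
  have hρSε : ρS ≤ ε / 16 := min_le_right _ _
  set β := (K - 1) / (K * K) with hβ_def
  have hβpos : 0 < β := div_pos (by linarith) (by positivity)
  have hKKβ : K * K * β = K - 1 := by rw [hβ_def]; field_simp
  have hβ2 : β ≤ 2 := by
    rw [hβ_def, div_le_iff₀ (by positivity)]
    nlinarith
  have hβ1 : β ≤ 1 := by
    rw [hβ_def, div_le_one (by positivity)]
    nlinarith
  set δ := β * ρS / 8 with hδ_def
  have hδpos : 0 < δ := by positivity
  have hδρS : δ ≤ ρS / 4 := by
    rw [hδ_def]
    nlinarith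
  refine ⟨Metric.ball u δ, Metric.isOpen_ball, Metric.mem_ball_self hδpos, ?_, ?_⟩
  · refine Subset.trans (Metric.ball_subset_ball ?_) hball
    linarith
  · intro x₁ hx₁ y₁ hy₁ x₂ hx₂ y₂ hy₂ hdist
    rw [Metric.mem_ball] at hx₁ hy₁ hx₂ hy₂
    -- generic facts about points of the small ball
    have hBgen : ∀ a b : U, dist a u < δ → dist b u < δ → ∀ q : U, ρS ≤ dist q u →
        dist b q ≤ K * dist a q := by
      intro a b ha hb q hq
      have h1 : dist b a ≤ dist b u + dist a u := by
        have := dist_triangle b u a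
        rw [dist_comm u a] at this; linarith
      have h2 : dist b q ≤ dist b a + dist a q := dist_triangle _ _ _
      have h3 : dist q u ≤ dist q a + dist a u := dist_triangle _ _ _
      have h4 : dist q a = dist a q := dist_comm _ _
      have hKm1 : β ≤ K - 1 := by
        have h9 : K - 1 - β = β * (K * K - 1) := by linear_combination (-1:ℝ) * hKKβ
        nlinarith [mul_nonneg hβpos.le (show (0:ℝ) ≤ K * K - 1 by nlinarith)]
      have h5 : ρS - δ ≤ dist a q := by linarith
      have h6 : 2 * δ ≤ (K - 1) * (ρS - δ) := by
        have e1 : 2 * δ = β * ρS / 4 := by rw [hδ_def]; ring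
        have e2 : β * (ρS - δ) ≤ (K - 1) * (ρS - δ) :=
          mul_le_mul_of_nonneg_right hKm1 (by linarith)
        have e3 : β * ρS / 4 ≤ β * (ρS - δ) := by nlinarith
        linarith
      have h7 : (K - 1) * (ρS - δ) ≤ (K - 1) * dist a q :=
        mul_le_mul_of_nonneg_left h5 (by linarith)
      nlinarith
    have hRgen : ∀ a b : U, dist a u < δ → dist b u < δ →
        dist a b ≤ β * max 0 (ρS - dist a u) := by
      intro a b ha hb
      have h1 : dist a b ≤ dist a u + dist b u := by
        have := dist_triangle a u b
        rw [dist_comm u b] at this; linarith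
      have h2 : ρS - δ ≤ max 0 (ρS - dist a u) :=
        le_trans (by linarith) (le_max_right _ _)
      have h3 : β * (ρS - δ) ≤ β * max 0 (ρS - dist a u) :=
        mul_le_mul_of_nonneg_left h2 hβpos.le
      have h4 : 2 * δ ≤ β * (ρS - δ) := by
        have e1 : 2 * δ = β * ρS / 4 := by rw [hδ_def]; ring
        nlinarith
      linarith
    set P₀ : Finset (U × U) := insert (x₁, x₂) {(y₁, y₂)} with hP₀_def
    have hP₀ne : P₀.Nonempty := ⟨(x₁, x₂), Finset.mem_insert_self _ _⟩
    have hP₀mem : ∀ p ∈ P₀, (p = (x₁, x₂) ∨ p = (y₁, y₂)) := by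
      intro p hp
      rcases Finset.mem_insert.1 hp with h | h
      · exact Or.inl h
      · exact Or.inr (Finset.mem_singleton.1 h)
    have hG₀ : Good K ρS β u P₀ := by
      refine ⟨?_, ?_, ?_⟩
      · intro p hp q hq
        rcases hP₀mem p hp with rfl | rfl <;> rcases hP₀mem q hq with rfl | rfl
        · simp [dist_self]
        · constructor
          · rw [← hdist]
            exact le_mul_of_one_le_left dist_nonneg hK.le
          · rw [hdist]
            exact le_mul_of_one_le_left dist_nonneg hK.le
        · constructor
          · rw [dist_comm y₂ x₂, dist_comm y₁ x₁, ← hdist]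
            exact le_mul_of_one_le_left dist_nonneg hK.le
          · rw [dist_comm y₂ x₂, dist_comm y₁ x₁, hdist]
            exact le_mul_of_one_le_left dist_nonneg hK.le
        · simp [dist_self]
      · intro p hp q hq
        rcases hP₀mem p hp with rfl | rfl
        · exact ⟨hBgen x₁ x₂ hx₁ hx₂ q hq, hBgen x₂ x₁ hx₂ hx₁ q hq⟩
        · exact ⟨hBgen y₁ y₂ hy₁ hy₂ q hq, hBgen y₂ y₁ hy₂ hy₁ q hq⟩
      · intro p hp
        rcases hP₀mem p hp with rfl | rfl
        · exact ⟨hRgen x₁ x₂ hx₁ hx₂, by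
            rw [dist_comm]; exact hRgen x₂ x₁ hx₂ hx₁⟩
        · exact ⟨hRgen y₁ y₂ hy₁ hy₂, by
            rw [dist_comm]; exact hRgen y₂ y₁ hy₂ hy₁⟩
    obtain ⟨g, gi, hleft, hright, hgK, hgK2, hgdisp, hgval⟩ :=
      exists_bilip hU hK hρS hβ_def hP₀ne hG₀
    set Bg : Bilip U := ⟨g, gi, hleft, hright, ⟨K, hK.le, fun v w =>
      ⟨by rw [one_div, inv_mul_le_iff₀ hK0]; exact hgK2 v w, hgK v w⟩⟩⟩ with hBg_def
    have hid : ∀ z ∉ X, g z = z := by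
      intro z hz
      have h1 : ρ₀ ≤ dist z u := by
        by_contra hc
        push_neg at hc
        exact hz (hball (Metric.mem_ball.2 hc))
      have h2 : max 0 (ρS - dist z u) = 0 := max_eq_left (by linarith)
      have h3 := hgdisp z
      rw [h2, mul_zero] at h3
      exact (eq_of_dist_eq_zero (le_antisymm h3 dist_nonneg)).symm
    refine ⟨Bg, hid, ?_, hgval (x₁, x₂) (Finset.mem_insert_self _ _),
      hgval (y₁, y₂) (Finset.mem_insert_of_mem (Finset.mem_singleton_self _))⟩
    -- the metric estimate
    rw [Bilip.dHat]
    have hdL : Bilip.dL Bilip.one Bg < ε := by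
      rw [Bilip.dL]
      have hmem : K ∈ Bilip.lipSet (Bilip.one.invFun ∘ Bg.toFun) := by
        refine ⟨hK.le, fun v w => ⟨?_, ?_⟩⟩
        · rw [one_div, inv_mul_le_iff₀ hK0]
          exact hgK2 v w
        · exact hgK v w
      have hbdd : BddBelow (Bilip.lipSet (Bilip.one.invFun ∘ Bg.toFun)) :=
        ⟨1, fun L hL => hL.1⟩
      have hne : (Bilip.lipSet (Bilip.one.invFun ∘ Bg.toFun)).Nonempty := ⟨K, hmem⟩
      have h1 : 1 ≤ Bilip.lipConst (Bilip.one.invFun ∘ Bg.toFun) :=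
        le_csInf hne (fun L hL => hL.1)
      have h2 : Bilip.lipConst (Bilip.one.invFun ∘ Bg.toFun) ≤ K := csInf_le hbdd hmem
      have h3 : Real.log (Bilip.lipConst (Bilip.one.invFun ∘ Bg.toFun)) ≤ Real.log K :=
        Real.log_le_log (by linarith) h2
      have h4 : Real.log K = min ε 1 / 2 := by rw [hK_def, Real.log_exp]
      have h5 : min ε 1 / 2 < ε := by
        have := min_le_left ε 1
        linarith
      linarith
    have hdS : Bilip.dS x₀ Bilip.one Bg < ε := by
      have hdisp' : ∀ x : U, dist x (g x) ≤ ρS := by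
        intro x
        refine le_trans (hgdisp x) ?_
        have h1 : max 0 (ρS - dist x u) ≤ ρS :=
          max_le hρS.le (by linarith [dist_nonneg (x := x) (y := u)])
        calc β * max 0 (ρS - dist x u) ≤ 1 * ρS := by
              refine mul_le_mul hβ1 h1 (le_max_left _ _) zero_le_one
          _ = ρS := one_mul _
      have hdn : ∀ n : ℕ, Bilip.dn x₀ n Bilip.one Bg ≤ ρS := by
        intro n
        rw [Bilip.dn]
        refine Real.sSup_le ?_ hρS.le
        rintro y ⟨x, _, rfl⟩
        exact hdisp' x
      have hdn0 : ∀ n : ℕ, 0 ≤ Bilip.dn x₀ n Bilip.one Bg := by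
        intro n
        rw [Bilip.dn]
        refine Real.sSup_nonneg ?_
        rintro y ⟨x, _, rfl⟩
        exact dist_nonneg
      have hble : ∀ n : ℕ, Bilip.dn x₀ n Bilip.one Bg / 2 ^ n ≤ ρS / 2 ^ n := by
        intro n
        gcongr
        exact hdn n
      have hsum2 : Summable (fun n : ℕ => ρS * (1/2:ℝ) ^ n) :=
        summable_geometric_two.mul_left ρS
      have hsum2' : Summable (fun n : ℕ => ρS / 2 ^ n) := by
        have : (fun n : ℕ => ρS / 2 ^ n) = fun n : ℕ => ρS * (1/2:ℝ) ^ n := by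
          funext n
          rw [one_div_pow, mul_one_div]
        rw [this]
        exact hsum2
      have hsum1 : Summable (fun n : ℕ => Bilip.dn x₀ n Bilip.one Bg / 2 ^ n) :=
        Summable.of_nonneg_of_le (fun n => div_nonneg (hdn0 n) (by positivity)) hble hsum2'
      have htsum : Bilip.dS x₀ Bilip.one Bg ≤ ρS * 2 := by
        rw [Bilip.dS]
        calc (∑' n : ℕ, Bilip.dn x₀ n Bilip.one Bg / 2 ^ n)
            ≤ ∑' n : ℕ, ρS / 2 ^ n := Summable.tsum_le_tsum hble hsum1 hsum2'
          _ = ∑' n : ℕ, ρS * (1/2:ℝ) ^ n := by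
              congr 1
              funext n
              rw [one_div_pow, mul_one_div]
          _ = ρS * 2 := by rw [tsum_mul_left, tsum_geometric_two]
      linarith
    exact max_lt hdL hdS
end
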